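/- arXiv:2510.04873 — 4 statements merged into one kernel-verified Lean document; each statement's English description precedes it below -/
import Mathlib

section
/- Proposition 2.1, weight 1/2: For all m, n ∈ ℤ and every odd integer c̃ > 0, setting c := 2c̃: S(m,4n,c,ν_Θ) = √2·S(m,n,c̃,ν_Θ) if m ≡ 0 or 1 (mod 4), and S(m,4n,c,ν_Θ) = −√2·S(m,n,c̃,ν_Θ) if m ≡ 2 or 3 (mod 4). -/
open Complex Real Filter Topology BigOperators MeasureTheory

noncomputable section

/-- `ee x = exp(2πix)`. -/
def ee (x : ℂ) : ℂ := Complex.exp (2 * (π : ℂ) * Complex.I * x)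

/-- `ε_d`: equals 1 if `d ≡ 1 (mod 4)` and `i` if `d ≡ 3 (mod 4)`. -/
def epsFactor (d : ℕ) : ℂ := if d % 4 = 1 then 1 else Complex.I

/-- Weight-`w/2` Kloosterman sum with theta multiplier, even modulus `c`:
`S(m,n,c,ν_Θ^w) = Σ_d ε_d^w (2c/d)^w e((m a_d + n d)/(2c))`, the sum over `0 < d < 2c`
with `gcd(d,2c)=1` and `a_d` the inverse of `d` modulo `2c` in `(0,2c)`. -/
def SKe (m n : ℤ) (c : ℕ) (w : ℕ) : ℂ :=
  ∑ d ∈ Finset.Ico 1 (2 * c), ∑ a ∈ Finset.Ico 1 (2 * c),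
    if (a * d) % (2 * c) = 1 then
      epsFactor d ^ w * ((jacobiSym (2 * (c : ℤ)) d : ℤ) : ℂ) ^ w *
        ee (((m * a + n * d : ℤ) : ℂ) / (2 * (c : ℕ)))
    else 0

/-- Weight-`w/2` Kloosterman sum with theta multiplier, odd modulus `c`:
`S(m,n,c,ν_Θ^w) = e(w/8) ε_c^{-w} Σ_d (2d/c)^w e((m a_d + n d)/(2c))`, the sum over even
`0 ≤ d < 2c` with `gcd(d,c)=1` and `a_d` the unique even inverse of `d` mod `c` in `[0,2c)`. -/
def SKo (m n : ℤ) (c : ℕ) (w : ℕ) : ℂ :=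
  ee ((w : ℂ) / 8) * (epsFactor c)⁻¹ ^ w *
    ∑ d ∈ Finset.range (2 * c), ∑ a ∈ Finset.range (2 * c),
      if d % 2 = 0 ∧ a % 2 = 0 ∧ (a * d) % c = 1 % c then
        ((jacobiSym (2 * (d : ℤ)) c : ℤ) : ℂ) ^ w *
          ee (((m * a + n * d : ℤ) : ℂ) / (2 * (c : ℕ)))
      else 0



-- ===== auxiliary machinery =====

lemma ee_add (x y : ℂ) : ee (x + y) = ee x * ee y := by
  simp [ee, mul_add, Complex.exp_add]

lemma ee_int (k : ℤ) : ee (k : ℂ) = 1 := by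
  rw [ee, show 2 * (π : ℂ) * Complex.I * (k : ℂ) = (k : ℂ) * (2 * π * Complex.I) by ring,
    Complex.exp_int_mul_two_pi_mul_I]

lemma ee_int_mul (k : ℤ) (x : ℂ) : ee ((k : ℂ) * x) = ee x ^ k := by
  rw [ee, ee, show 2 * (π:ℂ) * Complex.I * ((k:ℂ) * x) = (k:ℂ) * (2 * π * Complex.I * x) by ring,
    Complex.exp_int_mul]

lemma ee_congr_div (N : ℕ) (hN : 0 < N) {a b : ℤ} (h : ((a : ZMod N) = (b : ZMod N))) :
    ee ((a : ℂ) / (N : ℂ)) = ee ((b : ℂ) / (N : ℂ)) := by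
  have hd : (N : ℤ) ∣ b - a := (ZMod.intCast_eq_intCast_iff a b N).mp h |>.dvd
  obtain ⟨k, hk⟩ := hd
  have hN' : (N : ℂ) ≠ 0 := by exact_mod_cast hN.ne'
  have : (b : ℂ) / N = (a : ℂ)/N + (k : ℤ) := by
    have hb : (b : ℂ) = a + N * k := by
      exact_mod_cast congrArg (fun z : ℤ => (z : ℂ)) (by linarith [hk] : b = a + N * k)
    rw [hb]; field_simp
  rw [this, ee_add, ee_int, mul_one]

lemma ee_quarter : ee (1/4 : ℂ) = Complex.I := by
  have h : (2 * (π : ℂ) * Complex.I * (1/4)) = (π/2 : ℝ) * Complex.I := by push_cast; ring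
  rw [ee, h, Complex.exp_mul_I]
  norm_cast
  rw [Real.cos_pi_div_two, Real.sin_pi_div_two]
  simp

lemma ee_int_div_four (k : ℤ) : ee ((k : ℂ)/4) = Complex.I ^ k := by
  rw [show (k:ℂ)/4 = (k:ℂ) * (1/4) by ring, ee_int_mul, ee_quarter]

lemma ee_eighth : ee (1/8 : ℂ) * ((Real.sqrt 2 : ℝ) : ℂ) = 1 + Complex.I := by
  have h : (2 * (π : ℂ) * Complex.I * (1/8)) = (π/4 : ℝ) * Complex.I := by push_cast; ring
  rw [ee, h, Complex.exp_mul_I]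
  norm_cast
  rw [Real.cos_pi_div_four, Real.sin_pi_div_four]
  have h2 : ((Real.sqrt 2 : ℝ) : ℂ) ^ 2 = 2 := by
    norm_cast
    rw [Real.sq_sqrt (by norm_num : (0:ℝ) ≤ 2)]
  push_cast
  ring_nf
  rw [h2]
  ring

lemma I_zpow_congr {a b : ℤ} (h : a % 4 = b % 4) : Complex.I ^ a = Complex.I ^ b := by
  have hd : (4 : ℤ) ∣ b - a := Int.ModEq.dvd h
  obtain ⟨k, hk⟩ := hd
  have hb : b = a + 4 * k := by linarith
  rw [hb, zpow_add₀ Complex.I_ne_zero, show ((4:ℤ) * k) = (4:ℤ)*k from rfl]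
  rw [zpow_mul, show Complex.I ^ (4:ℤ) = 1 by
    rw [show (4:ℤ) = ((4:ℕ):ℤ) by norm_num, zpow_natCast, Complex.I_pow_four]]
  simp

lemma zmod_crt_eq {c : ℕ} (h : Nat.Coprime 4 c) {a b : ℤ}
    (h4 : (a : ZMod 4) = (b : ZMod 4)) (hc : (a : ZMod c) = (b : ZMod c)) :
    (a : ZMod (4*c)) = (b : ZMod (4*c)) := by
  apply (ZMod.chineseRemainder h).injective
  rw [map_intCast, map_intCast]
  ext
  · simpa using h4
  · simpa using hc

lemma neg_one_pow_nat (a : ℕ) : (-1 : ℂ) ^ a = if a % 2 = 0 then 1 else -1 := by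
  rcases Nat.even_or_odd a with he | ho
  · rw [he.neg_one_pow, if_pos (Nat.even_iff.mp he)]
  · rw [ho.neg_one_pow, if_neg (by simpa [Nat.odd_iff] using ho)]

lemma Iz0 : Complex.I ^ (0:ℤ) = 1 := zpow_zero _
lemma Iz1 : Complex.I ^ (1:ℤ) = Complex.I := zpow_one _
lemma Iz2 : Complex.I ^ (2:ℤ) = -1 := by
  rw [show (2:ℤ) = ((2:ℕ):ℤ) by norm_num, zpow_natCast, Complex.I_sq]
lemma Iz3 : Complex.I ^ (3:ℤ) = -Complex.I := by
  rw [show (3:ℤ) = ((3:ℕ):ℤ) by norm_num, zpow_natCast, pow_succ, Complex.I_sq]; ring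

lemma bracket (m : ℤ) (ct : ℕ) (hodd : ct % 2 = 1) :
    ee (((m * 1 * ct : ℤ) : ℂ)/4) + Complex.I * (-1 : ℂ)^(ct/2) * ee (((m * 3 * ct : ℤ) : ℂ)/4)
      = (if m % 4 = 0 ∨ m % 4 = 1 then 1 else -1) * ((Real.sqrt 2 : ℝ) : ℂ) * ee (1/8 : ℂ) *
        (epsFactor ct)⁻¹ := by
  have h8 := ee_eighth
  rw [ee_int_div_four, ee_int_div_four, neg_one_pow_nat]
  have key : ∀ j : ℤ, (m * j * ct) % 4 = ((m % 4) * j * ((ct % 4 : ℕ) : ℤ)) % 4 := by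
    intro j
    have h1 : m ≡ m % 4 [ZMOD 4] := (Int.emod_emod_of_dvd m dvd_rfl).symm
    have h2 : (ct : ℤ) ≡ ((ct % 4 : ℕ) : ℤ) [ZMOD 4] := by
      have : (ct : ℤ) ≡ (ct : ℤ) % 4 [ZMOD 4] := (Int.emod_emod_of_dvd _ dvd_rfl).symm
      simpa using this
    exact (h1.mul_right j).mul h2
  have hs : ct % 4 = 1 ∨ ct % 4 = 3 := by omega
  rcases hs with hs | hs
  · have hev : (ct/2) % 2 = 0 := by omega
    have heps : epsFactor ct = 1 := if_pos hs
    rw [heps, inv_one, if_pos hev]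
    have hr : m % 4 = 0 ∨ m % 4 = 1 ∨ m % 4 = 2 ∨ m % 4 = 3 := by omega
    rcases hr with hr | hr | hr | hr
    · rw [I_zpow_congr (show (m*1*ct) % 4 = (0:ℤ) % 4 by rw [key 1, hr, hs]; norm_num),
        I_zpow_congr (show (m*3*ct) % 4 = (0:ℤ) % 4 by rw [key 3, hr, hs]; norm_num),
        Iz0, if_pos (Or.inl hr)]
      linear_combination -h8
    · rw [I_zpow_congr (show (m*1*ct) % 4 = (1:ℤ) % 4 by rw [key 1, hr, hs]; norm_num),
        I_zpow_congr (show (m*3*ct) % 4 = (3:ℤ) % 4 by rw [key 3, hr, hs]; norm_num),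
        Iz1, Iz3, if_pos (Or.inr hr)]
      linear_combination -h8 - Complex.I_sq
    · rw [I_zpow_congr (show (m*1*ct) % 4 = (2:ℤ) % 4 by rw [key 1, hr, hs]; norm_num),
        I_zpow_congr (show (m*3*ct) % 4 = (2:ℤ) % 4 by rw [key 3, hr, hs]; norm_num),
        Iz2, if_neg (by omega)]
      linear_combination h8
    · rw [I_zpow_congr (show (m*1*ct) % 4 = (3:ℤ) % 4 by rw [key 1, hr, hs]; norm_num),
        I_zpow_congr (show (m*3*ct) % 4 = (1:ℤ) % 4 by rw [key 3, hr, hs]; norm_num),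
        Iz3, Iz1, if_neg (by omega)]
      linear_combination h8 + Complex.I_sq
  · have hev : (ct/2) % 2 = 1 := by omega
    have heps : epsFactor ct = Complex.I := if_neg (by omega)
    rw [heps, Complex.inv_I, if_neg (by omega)]
    have hr : m % 4 = 0 ∨ m % 4 = 1 ∨ m % 4 = 2 ∨ m % 4 = 3 := by omega
    rcases hr with hr | hr | hr | hr
    · rw [I_zpow_congr (show (m*1*ct) % 4 = (0:ℤ) % 4 by rw [key 1, hr, hs]; norm_num),
        I_zpow_congr (show (m*3*ct) % 4 = (0:ℤ) % 4 by rw [key 3, hr, hs]; norm_num),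
        Iz0, if_pos (Or.inl hr)]
      linear_combination Complex.I * h8 + Complex.I_sq
    · rw [I_zpow_congr (show (m*1*ct) % 4 = (3:ℤ) % 4 by rw [key 1, hr, hs]; norm_num),
        I_zpow_congr (show (m*3*ct) % 4 = (1:ℤ) % 4 by rw [key 3, hr, hs]; norm_num),
        Iz3, Iz1, if_pos (Or.inr hr)]
      linear_combination Complex.I * h8
    · rw [I_zpow_congr (show (m*1*ct) % 4 = (2:ℤ) % 4 by rw [key 1, hr, hs]; norm_num),
        I_zpow_congr (show (m*3*ct) % 4 = (2:ℤ) % 4 by rw [key 3, hr, hs]; norm_num),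
        Iz2, if_neg (by omega)]
      linear_combination -Complex.I*h8 - Complex.I_sq
    · rw [I_zpow_congr (show (m*1*ct) % 4 = (1:ℤ) % 4 by rw [key 1, hr, hs]; norm_num),
        I_zpow_congr (show (m*3*ct) % 4 = (3:ℤ) % 4 by rw [key 3, hr, hs]; norm_num),
        Iz1, Iz3, if_neg (by omega)]
      linear_combination -Complex.I*h8

/-- inverse of `d` mod `N`, as a value in `[0,N)`. -/
def Ainv (N d : ℕ) : ℕ := ((d : ZMod N)⁻¹).val
/-- even representative: `v` if even, else `v + c`. -/
def evRep (c v : ℕ) : ℕ := if v % 2 = 0 then v else v + c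
/-- the even inverse of `e` mod `c` in `[0,2c)`. -/
def aRHS (c e : ℕ) : ℕ := evRep c (((e : ZMod c))⁻¹.val)

lemma SKe_collapse (m n' : ℤ) (ct : ℕ) (hpos : 0 < ct) :
    SKe m n' (2*ct) 1 = ∑ d ∈ Finset.Ico 1 (4*ct), (if Nat.Coprime d (4*ct) then
      epsFactor d * ((jacobiSym ((4*ct : ℕ) : ℤ) d : ℤ) : ℂ) *
        ee (((m * (Ainv (4*ct) d) + n' * d : ℤ) : ℂ) / ((4*ct : ℕ) : ℂ)) else 0) := by
  haveI : NeZero (4*ct) := ⟨by omega⟩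
  rw [SKe]
  have hb : 2*(2*ct) = 4*ct := by ring
  rw [hb]
  refine Finset.sum_congr rfl fun d hd => ?_
  by_cases hcop : Nat.Coprime d (4*ct)
  · rw [if_pos hcop]
    have hu : IsUnit ((d : ZMod (4*ct))) := (ZMod.isUnit_iff_coprime d (4*ct)).mpr hcop
    set A := Ainv (4*ct) d with hA
    have hAcast : ((A : ℕ) : ZMod (4*ct)) = (d : ZMod (4*ct))⁻¹ := ZMod.natCast_zmod_val _
    have hA1 : (A * d) % (4*ct) = 1 := by
      have h1 : ((A * d : ℕ) : ZMod (4*ct)) = ((1 : ℕ) : ZMod (4*ct)) := by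
        push_cast
        rw [hAcast, ZMod.inv_mul_of_unit _ hu]
      have := (ZMod.natCast_eq_natCast_iff _ _ _).mp h1
      have h2 : (A * d) % (4*ct) = 1 % (4*ct) := this
      have h3 : 1 % (4*ct) = 1 := Nat.mod_eq_of_lt (by omega)
      rw [h3] at h2; exact h2
    have hAlt : A < 4*ct := ZMod.val_lt _
    have hAne : A ≠ 0 := by
      intro h0; rw [h0] at hA1; simp at hA1
    have hmem : A ∈ Finset.Ico 1 (4*ct) := Finset.mem_Ico.mpr ⟨by omega, hAlt⟩
    have hstep : ∀ a ∈ Finset.Ico 1 (4*ct),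
        (if (a * d) % (4*ct) = 1 then
          epsFactor d ^ 1 * ((jacobiSym (2 * ((2*ct : ℕ) : ℤ)) d : ℤ) : ℂ) ^ 1 *
            ee (((m * a + n' * d : ℤ) : ℂ) / (2 * ((2*ct : ℕ) : ℂ))) else 0)
        = (if a = A then
          epsFactor d ^ 1 * ((jacobiSym (2 * ((2*ct : ℕ) : ℤ)) d : ℤ) : ℂ) ^ 1 *
            ee (((m * a + n' * d : ℤ) : ℂ) / (2 * ((2*ct : ℕ) : ℂ))) else 0) := by
      intro a ha
      rw [Finset.mem_Ico] at ha
      congr 1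
      apply propext
      constructor
      · intro h
        have h1 : ((a * d : ℕ) : ZMod (4*ct)) = ((1 : ℕ) : ZMod (4*ct)) := by
          rw [ZMod.natCast_eq_natCast_iff]
          show (a*d) % (4*ct) = 1 % (4*ct)
          rw [h, Nat.mod_eq_of_lt (by omega)]
        have h2 : (d : ZMod (4*ct)) * (a : ZMod (4*ct)) = 1 := by
          push_cast at h1; linear_combination h1
        have h3 : (d : ZMod (4*ct))⁻¹ = (a : ZMod (4*ct)) :=
          ZMod.inv_eq_of_mul_eq_one _ _ _ h2
        have : A = (a : ZMod (4*ct)).val := by rw [hA, Ainv, h3]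
        rw [this, ZMod.val_natCast, Nat.mod_eq_of_lt ha.2]
      · intro h; rw [h]; exact hA1
    rw [Finset.sum_congr rfl hstep, Finset.sum_ite_eq' _ A _, if_pos hmem]
    rw [pow_one, pow_one]
    have hj : (2 * ((2*ct : ℕ) : ℤ)) = ((4*ct : ℕ) : ℤ) := by push_cast; ring
    rw [hj]
    have hden : (2 : ℂ) * ((2*ct : ℕ) : ℂ) = ((4*ct : ℕ) : ℂ) := by push_cast; ring
    rw [hden]
  · rw [if_neg hcop]
    apply Finset.sum_eq_zero
    intro a ha
    rw [if_neg]
    intro hc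
    apply hcop
    have hq := Nat.div_add_mod (a*d) (4*ct)
    rw [hc] at hq
    have hg1 : Nat.gcd d (4*ct) ∣ a * d := (Nat.gcd_dvd_left d (4*ct)).mul_left a
    have hg2 : Nat.gcd d (4*ct) ∣ (4*ct) * (a*d / (4*ct)) := (Nat.gcd_dvd_right d (4*ct)).mul_right _
    have : Nat.gcd d (4*ct) ∣ 1 := by
      have h1 : 1 = a*d - (4*ct) * (a*d/(4*ct)) := by omega
      rw [h1]; exact Nat.dvd_sub hg1 hg2
    exact Nat.dvd_one.mp this
lemma SKo_collapse (m n : ℤ) (ct : ℕ) (hpos : 0 < ct) (hodd : ct % 2 = 1) :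
    SKo m n ct 1 = ee ((1:ℂ)/8) * (epsFactor ct)⁻¹ *
      ∑ e ∈ Finset.range (2*ct), (if (e % 2 = 0 ∧ Nat.Coprime e ct) then
        ((jacobiSym (2 * (e : ℤ)) ct : ℤ) : ℂ) *
          ee (((m * (aRHS ct e) + n * e : ℤ) : ℂ) / ((2*ct : ℕ) : ℂ)) else 0) := by
  haveI : NeZero ct := ⟨by omega⟩
  rw [SKo]
  rw [show (((1:ℕ) : ℂ)/8) = (1:ℂ)/8 by norm_num, pow_one]
  congr 1
  refine Finset.sum_congr rfl fun e he => ?_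
  rw [Finset.mem_range] at he
  by_cases hcond : e % 2 = 0 ∧ Nat.Coprime e ct
  · obtain ⟨hev, hcop⟩ := hcond
    rw [if_pos ⟨hev, hcop⟩]
    have hu : IsUnit ((e : ZMod ct)) := (ZMod.isUnit_iff_coprime e ct).mpr hcop
    set v := ((e : ZMod ct))⁻¹.val with hv
    have hvlt : v < ct := ZMod.val_lt _
    have hvcast : ((v : ℕ) : ZMod ct) = ((e : ZMod ct))⁻¹ := ZMod.natCast_zmod_val _
    set a0 := aRHS ct e with ha0
    have ha0def : a0 = if v % 2 = 0 then v else v + ct := rfl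
    have ha0ev : a0 % 2 = 0 := by rw [ha0def]; split <;> omega
    have ha0lt : a0 < 2*ct := by rw [ha0def]; split <;> omega
    have ha0cast : ((a0 : ℕ) : ZMod ct) = ((e : ZMod ct))⁻¹ := by
      rw [ha0def]; split
      · exact hvcast
      · push_cast [ZMod.natCast_self]; rw [add_zero]; exact hvcast
    have ha0mul : (a0 * e) % ct = 1 % ct := by
      have h1 : ((a0 * e : ℕ) : ZMod ct) = ((1 : ℕ) : ZMod ct) := by
        push_cast
        rw [show ((a0:ℕ) : ZMod ct) * ((e:ℕ) : ZMod ct) = ((a0:ℕ) : ZMod ct) * (e : ZMod ct) from rfl,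
          ha0cast, ZMod.inv_mul_of_unit _ hu]
      exact (ZMod.natCast_eq_natCast_iff _ _ _).mp h1
    have hstep : ∀ a ∈ Finset.range (2*ct),
        (if e % 2 = 0 ∧ a % 2 = 0 ∧ (a * e) % ct = 1 % ct then
          ((jacobiSym (2 * (e : ℤ)) ct : ℤ) : ℂ) ^ 1 *
            ee (((m * a + n * e : ℤ) : ℂ) / (2 * ((ct : ℕ) : ℂ))) else 0)
        = (if a = a0 then
          ((jacobiSym (2 * (e : ℤ)) ct : ℤ) : ℂ) ^ 1 *
            ee (((m * a + n * e : ℤ) : ℂ) / (2 * ((ct : ℕ) : ℂ))) else 0) := by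
      intro a ha
      rw [Finset.mem_range] at ha
      congr 1
      apply propext
      constructor
      · rintro ⟨-, haev, hae⟩
        have h1 : ((a * e : ℕ) : ZMod ct) = ((1 : ℕ) : ZMod ct) :=
          (ZMod.natCast_eq_natCast_iff _ _ _).mpr hae
        have h2 : (e : ZMod ct) * (a : ZMod ct) = 1 := by
          push_cast at h1; linear_combination h1
        have h3 : ((e : ZMod ct))⁻¹ = (a : ZMod ct) := ZMod.inv_eq_of_mul_eq_one _ _ _ h2
        have hamod : a % ct = v := by rw [hv, h3, ZMod.val_natCast]
        have hq2 : a / ct < 2 := Nat.div_lt_of_lt_mul (by omega)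
        have hqm := Nat.div_add_mod a ct
        interval_cases h : a / ct
        · -- a = v
          have hav : a = v := by omega
          rw [ha0def, if_pos (by omega)]; omega
        · have hav : a = v + ct := by omega
          rw [ha0def, if_neg (by omega)]; omega
      · intro h; subst h; exact ⟨hev, ha0ev, ha0mul⟩
    rw [Finset.sum_congr rfl hstep, Finset.sum_ite_eq' _ a0 _,
      if_pos (Finset.mem_range.mpr ha0lt), pow_one]
    norm_cast
  · rw [if_neg hcond]
    apply Finset.sum_eq_zero
    intro a ha
    rw [if_neg]
    rintro ⟨hev, haev, hae⟩
    apply hcond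
    refine ⟨hev, ?_⟩
    have hdvd : (ct:ℤ) ∣ (1 - (a*e : ℕ)) := by
      have : (a*e : ℕ) ≡ 1 [MOD ct] := hae
      exact_mod_cast this.dvd
    have hg1 : (Nat.gcd e ct : ℤ) ∣ ((a*e : ℕ) : ℤ) := by
      exact_mod_cast ((Nat.gcd_dvd_left e ct).mul_left a)
    have hg2 : (Nat.gcd e ct : ℤ) ∣ (ct : ℤ) := by exact_mod_cast Nat.gcd_dvd_right e ct
    have : (Nat.gcd e ct : ℤ) ∣ 1 := by
      have := dvd_add hg1 (hg2.trans hdvd |>.mul_left 1)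
      simpa using (dvd_add hg1 (hg2.trans hdvd))
    have hg : Nat.gcd e ct = 1 := by exact_mod_cast Int.eq_one_of_dvd_one (by positivity) this
    exact hg

/-- CRT lift: the element of `[0,4c)` congruent to `t` mod 4 and to `e/2` mod `c`. -/
def phi (ct t e : ℕ) : ℕ :=
  if h : Nat.Coprime 4 ct then
    ((ZMod.chineseRemainder h).symm ((t : ZMod 4), (e : ZMod ct) * (2 : ZMod ct)⁻¹)).val
  else 0

/-- map back: even representative of `2d` mod `ct` in `[0,2ct)`. -/
def psi (ct d : ℕ) : ℕ := if ((2*d) % ct) % 2 = 0 then (2*d) % ct else (2*d) % ct + ct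

section
variable {ct : ℕ} (hpos : 0 < ct) (hodd : ct % 2 = 1)

lemma cop4 (hodd : ct % 2 = 1) : Nat.Coprime 4 ct := by
  have h2 : Nat.Coprime 2 ct := Nat.coprime_two_left.mpr (Nat.odd_iff.mpr hodd)
  simpa [show (4:ℕ) = 2^2 by norm_num] using h2.pow_left 2

lemma two_unit (hpos : 0 < ct) (hodd : ct % 2 = 1) : IsUnit (2 : ZMod ct) := by
  have : ((2:ℕ) : ZMod ct) = (2 : ZMod ct) := by push_cast; ring
  rw [← this]
  exact (ZMod.isUnit_iff_coprime 2 ct).mpr (Nat.coprime_two_left.mpr (Nat.odd_iff.mpr hodd))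

lemma phi_residues (hpos : 0 < ct) (hodd : ct % 2 = 1) (t e : ℕ) :
    ((phi ct t e : ℕ) : ZMod 4) = (t : ZMod 4) ∧
      ((phi ct t e : ℕ) : ZMod ct) = (e : ZMod ct) * (2 : ZMod ct)⁻¹ := by
  haveI : NeZero (4*ct) := ⟨by omega⟩
  have h := cop4 hodd
  rw [phi, dif_pos h]
  set x := (ZMod.chineseRemainder h).symm ((t : ZMod 4), (e : ZMod ct) * (2 : ZMod ct)⁻¹) with hx
  have h1 : ((x.val : ℕ) : ZMod (4*ct)) = x := ZMod.natCast_zmod_val _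
  have h2 : (ZMod.chineseRemainder h) ((x.val : ℕ) : ZMod (4*ct))
      = ((t : ZMod 4), (e : ZMod ct) * (2 : ZMod ct)⁻¹) := by
    rw [h1, hx, RingEquiv.apply_symm_apply]
  rw [map_natCast] at h2
  constructor
  · have := congrArg Prod.fst h2; simpa using this
  · have := congrArg Prod.snd h2; simpa using this

lemma phi_mod4 (hpos : 0 < ct) (hodd : ct % 2 = 1) {t : ℕ} (ht : t < 4) (e : ℕ) :
    phi ct t e % 4 = t := by
  have h := (phi_residues hpos hodd t e).1
  have : (phi ct t e % 4) = ((phi ct t e : ℕ) : ZMod 4).val := (ZMod.val_natCast _ _).symm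
  rw [this, h, ZMod.val_natCast, Nat.mod_eq_of_lt ht]

lemma phi_lt (hpos : 0 < ct) (hodd : ct % 2 = 1) (t e : ℕ) : phi ct t e < 4*ct := by
  haveI : NeZero (4*ct) := ⟨by omega⟩
  rw [phi, dif_pos (cop4 hodd)]
  exact ZMod.val_lt _

lemma phi_coprime (hpos : 0 < ct) (hodd : ct % 2 = 1) {t e : ℕ} (ht : t = 1 ∨ t = 3)
    (he : Nat.Coprime e ct) : Nat.Coprime (phi ct t e) (4*ct) := by
  haveI : NeZero (4*ct) := ⟨by omega⟩
  have h := cop4 hodd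
  have hut : IsUnit ((t : ZMod 4)) := by rcases ht with rfl | rfl <;> decide
  have hue : IsUnit ((e : ZMod ct)) := (ZMod.isUnit_iff_coprime e ct).mpr he
  have hu2 : IsUnit ((2 : ZMod ct)⁻¹) := by
    have h2 := two_unit hpos hodd
    exact IsUnit.of_mul_eq_one _ (ZMod.inv_mul_of_unit _ h2)
  have hpair : IsUnit (((t : ZMod 4), (e : ZMod ct) * (2 : ZMod ct)⁻¹) : ZMod 4 × ZMod ct) := by
    obtain ⟨a, ha⟩ := hut.exists_right_inv
    obtain ⟨b, hb⟩ := (hue.mul hu2).exists_right_inv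
    exact IsUnit.of_mul_eq_one (a, b) (by rw [Prod.mk_mul_mk, ha, hb]; rfl)
  have hx : IsUnit ((ZMod.chineseRemainder h).symm ((t : ZMod 4), (e : ZMod ct) * (2 : ZMod ct)⁻¹)) :=
    hpair.map (ZMod.chineseRemainder h).symm.toRingHom
  rw [phi, dif_pos h]
  have := ZMod.val_coe_unit_coprime hx.unit
  simpa using this

lemma psi_even (hodd : ct % 2 = 1) (d : ℕ) : psi ct d % 2 = 0 := by
  rw [psi]; split <;> omega

lemma psi_lt (hpos : 0 < ct) (d : ℕ) : psi ct d < 2*ct := by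
  have := Nat.mod_lt (2*d) hpos
  rw [psi]; split <;> omega

lemma psi_cast (hpos : 0 < ct) (d : ℕ) : ((psi ct d : ℕ) : ZMod ct) = 2 * (d : ZMod ct) := by
  rw [psi]
  split <;> push_cast [ZMod.natCast_mod, ZMod.natCast_self] <;> ring

lemma psi_coprime (hpos : 0 < ct) (hodd : ct % 2 = 1) {d : ℕ}
    (hd : Nat.Coprime d (4*ct)) : Nat.Coprime (psi ct d) ct := by
  haveI : NeZero ct := ⟨by omega⟩
  have hdct : Nat.Coprime d ct := Nat.Coprime.coprime_dvd_right ⟨4, by ring⟩ hd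
  have h2d : Nat.Coprime (2*d) ct :=
    Nat.Coprime.mul (Nat.coprime_two_left.mpr (Nat.odd_iff.mpr hodd)) hdct
  have : IsUnit ((psi ct d : ℕ) : ZMod ct) := by
    rw [psi_cast hpos]
    have := (ZMod.isUnit_iff_coprime (2*d) ct).mpr h2d
    push_cast at this
    exact this
  exact (ZMod.isUnit_iff_coprime _ _).mp this

lemma psi_phi (hpos : 0 < ct) (hodd : ct % 2 = 1) {t e : ℕ} (he2 : e < 2*ct)
    (heev : e % 2 = 0) : psi ct (phi ct t e) = e := by
  -- (2 * phi) % ct = e % ct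
  have hres := (phi_residues hpos hodd t e).2
  have hcast : ((2 * phi ct t e : ℕ) : ZMod ct) = ((e : ℕ) : ZMod ct) := by
    push_cast [hres]
    rw [mul_comm ((e : ZMod ct)) ((2 : ZMod ct)⁻¹), ← mul_assoc,
      ZMod.mul_inv_of_unit _ (two_unit hpos hodd), one_mul]
  have hmod : (2 * phi ct t e) % ct = e % ct := (ZMod.natCast_eq_natCast_iff _ _ _).mp hcast
  rw [psi, hmod]
  rcases lt_or_ge e ct with h | h
  · rw [Nat.mod_eq_of_lt h, if_pos heev]
  · have hect : e % ct = e - ct := by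
      rw [Nat.mod_eq_sub_mod h, Nat.mod_eq_of_lt (by omega)]
    rw [hect, if_neg (by omega)]
    omega

lemma phi_psi (hpos : 0 < ct) (hodd : ct % 2 = 1) {t d : ℕ} (ht : t < 4)
    (hd1 : 1 ≤ d) (hd2 : d < 4*ct) (hdcop : Nat.Coprime d (4*ct)) (hd4 : d % 4 = t) :
    phi ct t (psi ct d) = d := by
  haveI : NeZero (4*ct) := ⟨by omega⟩
  have h := cop4 hodd
  rw [phi, dif_pos h]
  have hc1 : ((d : ℕ) : ZMod 4) = (t : ZMod 4) := by
    conv_lhs => rw [← Nat.mod_add_div d 4]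
    push_cast [hd4, ZMod.natCast_self]
    rw [show (4 : ZMod 4) = 0 from by decide]
    ring
  have hc2 : ((psi ct d : ℕ) : ZMod ct) * (2 : ZMod ct)⁻¹ = ((d : ℕ) : ZMod ct) := by
    rw [psi_cast hpos, mul_comm (2 : ZMod ct) ((d : ℕ) : ZMod ct), mul_assoc,
      ZMod.mul_inv_of_unit _ (two_unit hpos hodd), mul_one]
  have hcrt : (ZMod.chineseRemainder h) ((d : ℕ) : ZMod (4*ct))
      = ((t : ZMod 4), ((psi ct d : ℕ) : ZMod ct) * (2 : ZMod ct)⁻¹) := by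
    rw [map_natCast]
    ext
    · simpa using hc1
    · simpa using hc2.symm
  rw [← hcrt, RingEquiv.symm_apply_apply, ZMod.val_natCast, Nat.mod_eq_of_lt hd2]
end

lemma aRHS_cast {ct : ℕ} (hpos : 0 < ct) (e : ℕ) :
    ((aRHS ct e : ℕ) : ZMod ct) = ((e : ZMod ct))⁻¹ := by
  haveI : NeZero ct := ⟨by omega⟩
  rw [aRHS, evRep]
  split
  · exact ZMod.natCast_zmod_val _
  · push_cast [ZMod.natCast_self]
    rw [add_zero]
    exact ZMod.natCast_zmod_val _

lemma aRHS_even {ct : ℕ} (hodd : ct % 2 = 1) (e : ℕ) : aRHS ct e % 2 = 0 := by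
  rw [aRHS, evRep]; split <;> omega

lemma term_eval (m n : ℤ) (ct : ℕ) (hpos : 0 < ct) (hodd : ct % 2 = 1) {t e : ℕ}
    (ht : t = 1 ∨ t = 3) (he2 : e < 2*ct) (heev : e % 2 = 0) (hecop : Nat.Coprime e ct) :
    epsFactor (phi ct t e) * ((jacobiSym ((4*ct : ℕ) : ℤ) (phi ct t e) : ℤ) : ℂ) *
      ee (((m * (Ainv (4*ct) (phi ct t e)) + (4*n) * (phi ct t e) : ℤ) : ℂ) / ((4*ct : ℕ) : ℂ))
    = ((if t = 1 then 1 else Complex.I * (-1:ℂ)^(ct/2)) *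
        (((jacobiSym (2*(e:ℤ)) ct : ℤ) : ℂ) *
          ee (((m * (aRHS ct e) + n * e : ℤ) : ℂ) / ((2*ct : ℕ) : ℂ)))) *
      ee (((m * t * ct : ℤ) : ℂ) / 4) := by
  haveI : NeZero (4*ct) := ⟨by omega⟩
  haveI : NeZero ct := ⟨by omega⟩
  set D := phi ct t e with hD
  set A := Ainv (4*ct) D with hA
  set a0 := aRHS ct e with ha0
  have ht4 : t < 4 := by rcases ht with rfl | rfl <;> omega
  have hD4 : D % 4 = t := phi_mod4 hpos hodd ht4 e
  have hDodd : D % 2 = 1 := by rcases ht with rfl | rfl <;> omega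
  have hDcop : Nat.Coprime D (4*ct) := phi_coprime hpos hodd ht hecop
  have hDc : ((D : ℕ) : ZMod ct) = (e : ZMod ct) * (2 : ZMod ct)⁻¹ := (phi_residues hpos hodd t e).2
  have hDu : IsUnit ((D : ℕ) : ZMod (4*ct)) := (ZMod.isUnit_iff_coprime D (4*ct)).mpr hDcop
  have hAcast : ((A : ℕ) : ZMod (4*ct)) = ((D : ℕ) : ZMod (4*ct))⁻¹ := ZMod.natCast_zmod_val _
  have hAD : ((A : ℕ) : ZMod (4*ct)) * ((D : ℕ) : ZMod (4*ct)) = 1 := by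
    rw [hAcast]; exact ZMod.inv_mul_of_unit _ hDu
  -- component facts mod 4
  have hD4cast : ((D : ℕ) : ZMod 4) = (t : ZMod 4) := by
    conv_lhs => rw [← Nat.mod_add_div D 4]
    push_cast [hD4]
    rw [show (4 : ZMod 4) = 0 from by decide]
    ring
  have hAD4 : ((A : ℕ) : ZMod 4) * ((D : ℕ) : ZMod 4) = 1 := by
    have h := congrArg (ZMod.castHom (show (4:ℕ) ∣ 4*ct from ⟨ct, rfl⟩) (ZMod 4)) hAD
    rwa [map_mul, map_one, map_natCast, map_natCast] at h
  have hA4 : ((A : ℕ) : ZMod 4) = (t : ZMod 4) := by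
    rw [hD4cast] at hAD4
    rcases ht with rfl | rfl
    · have : ∀ x : ZMod 4, x * ((1:ℕ) : ZMod 4) = 1 → x = ((1:ℕ) : ZMod 4) := by decide
      exact this _ hAD4
    · have : ∀ x : ZMod 4, x * ((3:ℕ) : ZMod 4) = 1 → x = ((3:ℕ) : ZMod 4) := by decide
      exact this _ hAD4
  -- component facts mod ct
  have hADc : ((A : ℕ) : ZMod ct) * ((D : ℕ) : ZMod ct) = 1 := by
    have h := congrArg (ZMod.castHom (show ct ∣ 4*ct from ⟨4, by ring⟩) (ZMod ct)) hAD
    rwa [map_mul, map_one, map_natCast, map_natCast] at h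
  have ha0cast : ((a0 : ℕ) : ZMod ct) = ((e : ZMod ct))⁻¹ := aRHS_cast hpos e
  have heu : IsUnit ((e : ZMod ct)) := (ZMod.isUnit_iff_coprime e ct).mpr hecop
  have hee : (e : ZMod ct) * ((e : ZMod ct))⁻¹ = 1 := ZMod.mul_inv_of_unit _ heu
  have h2i : ((2 : ZMod ct))⁻¹ * (2 : ZMod ct) = 1 := ZMod.inv_mul_of_unit _ (two_unit hpos hodd)
  have hAc : ((A : ℕ) : ZMod ct) = 2 * ((a0 : ℕ) : ZMod ct) := by
    rw [ha0cast]
    rw [hDc] at hADc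
    linear_combination (2*((e : ZMod ct))⁻¹)*hADc
      - (((A:ℕ) : ZMod ct))*(2*((2 : ZMod ct))⁻¹)*hee - (((A:ℕ) : ZMod ct))*h2i
  -- epsFactor value
  have heps : epsFactor D = (if t = 1 then 1 else Complex.I) := by
    rw [epsFactor, hD4]
  -- jacobi symbol
  have hjac : ((jacobiSym ((4*ct : ℕ) : ℤ) D : ℤ) : ℂ)
      = (if t = 1 then 1 else (-1:ℂ)^(ct/2)) * ((jacobiSym (2*(e:ℤ)) ct : ℤ) : ℂ) := by
    have hg2D : Int.gcd 2 (D : ℤ) = 1 := by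
      have : Nat.gcd 2 D = 1 := Nat.coprime_two_left.mpr (Nat.odd_iff.mpr hDodd)
      simpa [Int.gcd] using this
    have hg2ct : Int.gcd 2 (ct : ℤ) = 1 := by
      have : Nat.gcd 2 ct = 1 := Nat.coprime_two_left.mpr (Nat.odd_iff.mpr hodd)
      simpa [Int.gcd] using this
    have hJ4D : jacobiSym (4 : ℤ) D = 1 := by
      rw [show (4:ℤ) = 2^2 by norm_num]
      exact jacobiSym.sq_one' hg2D
    have hJ4ct : jacobiSym (4 : ℤ) ct = 1 := by
      rw [show (4:ℤ) = 2^2 by norm_num]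
      exact jacobiSym.sq_one' hg2ct
    have hsplit : jacobiSym ((4*ct : ℕ) : ℤ) D = jacobiSym ((ct : ℕ) : ℤ) D := by
      rw [show ((4*ct : ℕ) : ℤ) = 4 * ((ct:ℕ) : ℤ) by push_cast; ring, jacobiSym.mul_left,
        hJ4D, one_mul]
    have hrec : jacobiSym ((ct : ℕ) : ℤ) D
        = (-1)^(ct/2 * (D/2)) * jacobiSym ((D : ℕ) : ℤ) ct :=
      jacobiSym.quadratic_reciprocity (Nat.odd_iff.mpr hodd) (Nat.odd_iff.mpr hDodd)
    have hmodct : ((4*D : ℕ) : ZMod ct) = ((2*e : ℕ) : ZMod ct) := by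
      push_cast [hDc]
      linear_combination (2*(e : ZMod ct))*h2i
    have hmod' : ((4*D : ℕ) : ℤ) % (ct : ℤ) = ((2*e : ℕ) : ℤ) % (ct : ℤ) := by
      have h1 : (4*D) % ct = (2*e) % ct := (ZMod.natCast_eq_natCast_iff _ _ _).mp hmodct
      exact_mod_cast congrArg (fun x : ℕ => (x : ℤ)) h1
    have hDct : jacobiSym ((D : ℕ) : ℤ) ct = jacobiSym (2*(e:ℤ)) ct := by
      have h1 : jacobiSym ((4*D : ℕ) : ℤ) ct = jacobiSym ((2*e : ℕ) : ℤ) ct :=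
        jacobiSym.mod_left' hmod'
      rw [show ((4*D : ℕ) : ℤ) = 4 * ((D:ℕ) : ℤ) by push_cast; ring, jacobiSym.mul_left,
        hJ4ct, one_mul] at h1
      rw [h1]
      norm_cast
    rw [hsplit, hrec, hDct]
    push_cast
    rw [neg_one_pow_nat (ct/2 * (D/2)), neg_one_pow_nat (ct/2)]
    rcases ht with rfl | rfl
    · have hmm : (ct/2 * (D/2)) % 2 = 0 := by
        have hD2 : (D/2) % 2 = 0 := by omega
        rw [Nat.mul_mod, hD2]; omega
      rw [hmm]
      simp
    · have hmm : (ct/2 * (D/2)) % 2 = ct/2 % 2 := by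
        have hD2 : (D/2) % 2 = 1 := by omega
        rw [Nat.mul_mod, hD2]; omega
      rw [hmm, if_neg (by norm_num : ¬ (3 = 1))]
  -- the exponential
  obtain ⟨w, hw⟩ : ∃ w, a0 = 2*w := ⟨a0/2, by have := aRHS_even hodd e; omega⟩
  obtain ⟨e', hee'⟩ : ∃ e', e = 2*e' := ⟨e/2, by omega⟩
  have hct4sq : ((ct : ℕ) : ZMod 4) * ((ct : ℕ) : ZMod 4) = 1 := by
    have h14 : ct % 4 = 1 ∨ ct % 4 = 3 := by omega
    have hcast : ((ct : ℕ) : ZMod 4) = ((ct % 4 : ℕ) : ZMod 4) := (ZMod.natCast_mod ct 4).symm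
    rcases h14 with h | h <;> rw [hcast, h] <;> decide
  have ha04 : ((a0 : ℕ) : ZMod 4) = 2*((w : ℕ) : ZMod 4) := by
    have h := congrArg (Nat.cast : ℕ → ZMod 4) hw
    push_cast at h
    exact h
  have he4 : ((e : ℕ) : ZMod 4) = 2*((e' : ℕ) : ZMod 4) := by
    have h := congrArg (Nat.cast : ℕ → ZMod 4) hee'
    push_cast at h
    exact h
  have h40 : (4 : ZMod 4) = 0 := by decide
  have hDc2 : 2*((D : ℕ) : ZMod ct) = ((e : ℕ) : ZMod ct) := by
    rw [hDc]
    linear_combination ((e : ℕ) : ZMod ct)*h2i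
  have hctc : ((ct : ℕ) : ZMod ct) = 0 := ZMod.natCast_self ct
  have C1 : ((m * (A : ℤ) + (4*n) * (D : ℤ) : ℤ) : ZMod (4*ct)) = (((2*(m * (a0 : ℤ) + n * (e : ℤ)) + (m*(t : ℤ)*(ct : ℤ))*(ct : ℤ) - (4*(ct : ℤ))*(m*(w : ℤ))) : ℤ) : ZMod (4*ct)) := by
    apply zmod_crt_eq (cop4 hodd)
    · push_cast
      linear_combination (m : ZMod 4)*hA4 - (m : ZMod 4)*((t : ℕ) : ZMod 4)*hct4sq
        - 2*(m : ZMod 4)*ha04 - 2*(n : ZMod 4)*he4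
        + ((n : ZMod 4)*((D : ℕ) : ZMod 4) - (n : ZMod 4)*((e' : ℕ) : ZMod 4)
          + ((ct : ℕ) : ZMod 4)*(m : ZMod 4)*((w : ℕ) : ZMod 4)
          - (m : ZMod 4)*((w : ℕ) : ZMod 4))*h40
    · push_cast
      linear_combination (m : ZMod ct)*hAc + 2*(n : ZMod ct)*hDc2
        + (-((m : ZMod ct)*((t : ℕ) : ZMod ct)*((ct : ℕ) : ZMod ct))
          + 4*(m : ZMod ct)*((w : ℕ) : ZMod ct))*hctc
  have hEE : ee (((m * (A : ℤ) + (4*n) * (D : ℤ) : ℤ) : ℂ) / ((4*ct : ℕ) : ℂ))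
      = ee ((((2*(m * (a0 : ℤ) + n * (e : ℤ)) + (m*(t : ℤ)*(ct : ℤ))*(ct : ℤ) - (4*(ct : ℤ))*(m*(w : ℤ))) : ℤ) : ℂ) / ((4*ct : ℕ) : ℂ)) := ee_congr_div (4*ct) (by omega) C1
  have hctC : ((ct : ℕ) : ℂ) ≠ 0 := by
    simp only [ne_eq, Nat.cast_eq_zero]; omega
  have harg : (((2*(m * (a0 : ℤ) + n * (e : ℤ)) + (m*(t : ℤ)*(ct : ℤ))*(ct : ℤ) - (4*(ct : ℤ))*(m*(w : ℤ))) : ℤ) : ℂ) / ((4*ct : ℕ) : ℂ)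
      = ((m * (a0 : ℤ) + n * (e : ℤ) : ℤ) : ℂ)/((2*ct : ℕ) : ℂ) + ((m*(t : ℤ)*(ct : ℤ) : ℤ) : ℂ)/4
        + ((-(m*(w : ℤ)) : ℤ) : ℂ) := by
    push_cast
    field_simp
    ring
  rw [hEE, harg, ee_add, ee_add, ee_int, mul_one, heps, hjac]
  rcases ht with rfl | rfl
  · norm_num
    ring
  · norm_num
    ring

lemma pair_sum (m n : ℤ) (ct : ℕ) (hpos : 0 < ct) (hodd : ct % 2 = 1) {e : ℕ}
    (he2 : e < 2*ct) (heev : e % 2 = 0) (hecop : Nat.Coprime e ct) :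
    (epsFactor (phi ct 1 e) * ((jacobiSym ((4*ct : ℕ) : ℤ) (phi ct 1 e) : ℤ) : ℂ) *
        ee (((m * (Ainv (4*ct) (phi ct 1 e)) + (4*n) * (phi ct 1 e) : ℤ) : ℂ) / ((4*ct : ℕ) : ℂ)))
      + (epsFactor (phi ct 3 e) * ((jacobiSym ((4*ct : ℕ) : ℤ) (phi ct 3 e) : ℤ) : ℂ) *
        ee (((m * (Ainv (4*ct) (phi ct 3 e)) + (4*n) * (phi ct 3 e) : ℤ) : ℂ) / ((4*ct : ℕ) : ℂ)))
    = (if m % 4 = 0 ∨ m % 4 = 1 then 1 else -1) * ((Real.sqrt 2 : ℝ) : ℂ) *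
        (ee ((1:ℂ)/8) * (epsFactor ct)⁻¹ *
          (((jacobiSym (2*(e:ℤ)) ct : ℤ) : ℂ) *
            ee (((m * (aRHS ct e) + n * e : ℤ) : ℂ) / ((2*ct : ℕ) : ℂ)))) := by
  rw [term_eval m n ct hpos hodd (Or.inl rfl) he2 heev hecop,
    term_eval m n ct hpos hodd (Or.inr rfl) he2 heev hecop]
  have hb := bracket m ct hodd
  have h1 : ((m * ((1:ℕ) : ℤ) * ct : ℤ) : ℂ) = ((m * 1 * ct : ℤ) : ℂ) := by norm_num
  have h3 : ((m * ((3:ℕ) : ℤ) * ct : ℤ) : ℂ) = ((m * 3 * ct : ℤ) : ℂ) := by norm_num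
  rw [if_pos rfl, if_neg (by norm_num : ¬ ((3:ℕ) = 1)), h1, h3]
  linear_combination (((jacobiSym (2*(e:ℤ)) ct : ℤ) : ℂ) *
    ee (((m * (aRHS ct e) + n * e : ℤ) : ℂ) / ((2*ct : ℕ) : ℂ))) * hb

/-- **Proposition 2.1, weight 1/2** -/
theorem kloosterman_even_odd_weight_half (m n : ℤ) (ct : ℕ) (hodd : Odd ct) (hpos : 0 < ct) :
    (m % 4 = 0 ∨ m % 4 = 1 →
      SKe m (4 * n) (2 * ct) 1 = ((Real.sqrt 2 : ℝ) : ℂ) * SKo m n ct 1) ∧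
    (m % 4 = 2 ∨ m % 4 = 3 →
      SKe m (4 * n) (2 * ct) 1 = -((Real.sqrt 2 : ℝ) : ℂ) * SKo m n ct 1) := by
  have hodd' : ct % 2 = 1 := Nat.odd_iff.mp hodd
  suffices h : SKe m (4*n) (2*ct) 1
      = (if m % 4 = 0 ∨ m % 4 = 1 then 1 else -1) * (((Real.sqrt 2 : ℝ) : ℂ) * SKo m n ct 1) by
    constructor
    · intro hm; rw [h, if_pos hm, one_mul]
    · intro hm
      rw [h, if_neg (by omega)]
      ring
  rw [SKe_collapse m (4*n) ct hpos, SKo_collapse m n ct hpos hodd']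
  rw [← Finset.sum_filter, ← Finset.sum_filter]
  set F : ℕ → ℂ := fun d => epsFactor d * ((jacobiSym ((4*ct : ℕ) : ℤ) d : ℤ) : ℂ) *
    ee (((m * (Ainv (4*ct) d) + (4*n) * d : ℤ) : ℂ) / ((4*ct : ℕ) : ℂ)) with hF
  set G : ℕ → ℂ := fun e => ((jacobiSym (2*(e:ℤ)) ct : ℤ) : ℂ) *
    ee (((m * (aRHS ct e) + n * e : ℤ) : ℂ) / ((2*ct : ℕ) : ℂ)) with hG
  set SL := (Finset.Ico 1 (4*ct)).filter (fun d => Nat.Coprime d (4*ct)) with hSL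
  set SR := (Finset.range (2*ct)).filter (fun e => e % 2 = 0 ∧ Nat.Coprime e ct) with hSR
  have hoddd : ∀ d : ℕ, Nat.Coprime d (4*ct) → d % 2 = 1 := by
    intro d hd
    by_contra hcon
    have h2 : (2:ℕ) ∣ Nat.gcd d (4*ct) := Nat.dvd_gcd ⟨d/2, by omega⟩ ⟨2*ct, by ring⟩
    have := hd
    rw [Nat.Coprime] at this
    omega
  have hsplit : ∑ d ∈ SL, F d
      = ∑ d ∈ SL.filter (fun d => d % 4 = 1), F d + ∑ d ∈ SL.filter (fun d => ¬ (d % 4 = 1)), F d :=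
    (Finset.sum_filter_add_sum_filter_not SL _ F).symm
  have hfilter3 : SL.filter (fun d => ¬ (d % 4 = 1)) = SL.filter (fun d => d % 4 = 3) := by
    ext d
    simp only [Finset.mem_filter, hSL, Finset.mem_Ico]
    constructor
    · rintro ⟨⟨⟨h1, h2⟩, h3⟩, h4⟩
      have := hoddd d h3
      exact ⟨⟨⟨h1, h2⟩, h3⟩, by omega⟩
    · rintro ⟨⟨⟨h1, h2⟩, h3⟩, h4⟩
      exact ⟨⟨⟨h1, h2⟩, h3⟩, by omega⟩
  have hbij : ∀ t : ℕ, t = 1 ∨ t = 3 →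
      ∑ d ∈ SL.filter (fun d => d % 4 = t), F d = ∑ e ∈ SR, F (phi ct t e) := by
    intro t ht
    refine Finset.sum_nbij' (fun d => psi ct d) (fun e => phi ct t e) ?_ ?_ ?_ ?_ ?_
    · intro d hd
      simp only [Finset.mem_filter, hSL, Finset.mem_Ico] at hd
      obtain ⟨⟨⟨hd1, hd2⟩, hd3⟩, hd4⟩ := hd
      simp only [Finset.mem_filter, hSR, Finset.mem_range]
      exact ⟨psi_lt hpos d, psi_even hodd' d, psi_coprime hpos hodd' hd3⟩
    · intro e he
      simp only [Finset.mem_filter, hSR, Finset.mem_range] at he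
      obtain ⟨he1, he2, he3⟩ := he
      simp only [Finset.mem_filter, hSL, Finset.mem_Ico]
      have hcop := phi_coprime hpos hodd' ht he3
      have hlt := phi_lt hpos hodd' t e
      have ht4 : t < 4 := by rcases ht with rfl | rfl <;> omega
      have hm4 := phi_mod4 hpos hodd' ht4 e
      refine ⟨⟨⟨?_, hlt⟩, hcop⟩, hm4⟩
      rcases ht with rfl | rfl <;> omega
    · intro d hd
      simp only [Finset.mem_filter, hSL, Finset.mem_Ico] at hd
      obtain ⟨⟨⟨hd1, hd2⟩, hd3⟩, hd4⟩ := hd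
      have ht4 : t < 4 := by rcases ht with rfl | rfl <;> omega
      exact phi_psi hpos hodd' ht4 hd1 hd2 hd3 hd4
    · intro e he
      simp only [Finset.mem_filter, hSR, Finset.mem_range] at he
      exact psi_phi hpos hodd' he.1 he.2.1
    · intro d hd
      simp only [Finset.mem_filter, hSL, Finset.mem_Ico] at hd
      obtain ⟨⟨⟨hd1, hd2⟩, hd3⟩, hd4⟩ := hd
      have ht4 : t < 4 := by rcases ht with rfl | rfl <;> omega
      rw [phi_psi hpos hodd' ht4 hd1 hd2 hd3 hd4]
  rw [hsplit, hfilter3, hbij 1 (Or.inl rfl), hbij 3 (Or.inr rfl), ← Finset.sum_add_distrib]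
  have hterm : ∀ e ∈ SR, F (phi ct 1 e) + F (phi ct 3 e)
      = (if m % 4 = 0 ∨ m % 4 = 1 then 1 else -1) * ((Real.sqrt 2 : ℝ) : ℂ) *
        (ee ((1:ℂ)/8) * (epsFactor ct)⁻¹ * G e) := by
    intro e he
    simp only [Finset.mem_filter, hSR, Finset.mem_range] at he
    exact pair_sum m n ct hpos hodd' he.1 he.2.1 he.2.2
  rw [Finset.sum_congr rfl hterm]
  rw [← Finset.mul_sum, ← Finset.mul_sum]
  ring

end
end

section
/- Proposition 2.1, weight 3/2: For all m, n ∈ ℤ and every odd integer c̃ > 0, setting c := 2c̃: S(m,4n,c,ν_Θ³) = −√2·S(m,n,c̃,ν_Θ³) if m ≡ 0 or 3 (mod 4), and S(m,4n,c,ν_Θ³) = √2·S(m,n,c̃,ν_Θ³) if m ≡ 1 or 2 (mod 4). -/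
open Complex Real Filter Topology BigOperators MeasureTheory

noncomputable section

namespace Kl

lemma ee_add (x y : ℂ) : ee (x + y) = ee x * ee y := by
  simp [ee, mul_add, Complex.exp_add]

lemma ee_int (k : ℤ) : ee (k : ℂ) = 1 := by
  have := Complex.exp_int_mul_two_pi_mul_I k
  simpa [ee, mul_comm, mul_assoc, mul_left_comm] using this

lemma ee_congr_int {M : ℕ} (hM : 0 < M) {x y : ℤ} (h : x % (M : ℤ) = y % (M : ℤ)) :
    ee ((x : ℂ) / (M : ℂ)) = ee ((y : ℂ) / (M : ℂ)) := by
  have hdvd : (M : ℤ) ∣ x - y := Int.ModEq.dvd (Int.ModEq.symm h)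
  obtain ⟨k, hk⟩ := hdvd
  have hx : x = y + M * k := by linarith
  have hM0 : (M : ℂ) ≠ 0 := by exact_mod_cast hM.ne'
  have : ((x : ℤ) : ℂ) / (M : ℂ) = (y : ℂ) / M + (k : ℂ) := by
    rw [hx]; push_cast; field_simp
  rw [this, ee_add, ee_int, mul_one]

def crt (N δ v : ℕ) : ℕ := (δ * (N * N) + 4 * v * (((N + 1) / 2) ^ 2)) % (4 * N)

variable {N : ℕ}

lemma crt_mod_four (hN : Odd N) (hpos : 0 < N) (δ v : ℕ) : crt N δ v % 4 = δ % 4 := by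
  obtain ⟨t, ht⟩ := hN
  unfold crt
  rw [Nat.mod_mod_of_dvd _ ⟨N, rfl⟩]
  have h1 : δ * (N * N) + 4 * v * (((N + 1) / 2) ^ 2)
      = 4 * (δ * (t * t + t) + v * (((N + 1) / 2) ^ 2)) + δ := by
    subst ht; ring
  omega

lemma crt_mod_N (hN : Odd N) (hpos : 0 < N) (δ : ℕ) {v : ℕ} (hv : v < N) :
    crt N δ v % N = v := by
  obtain ⟨t, ht⟩ := hN
  unfold crt
  rw [Nat.mod_mod_of_dvd _ ⟨4, by ring⟩]
  have hs : 2 * ((N + 1) / 2) = N + 1 := by omega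
  have h1 : δ * (N * N) + 4 * v * (((N + 1) / 2) ^ 2)
      = N * (δ * N + v * N + 2 * v) + v := by
    have : 4 * v * (((N + 1) / 2) ^ 2) = v * ((2 * ((N + 1) / 2)) * (2 * ((N + 1) / 2))) := by
      ring
    rw [this, hs]; ring
  rw [h1, Nat.mul_add_mod, Nat.mod_eq_of_lt hv]

lemma crt_lt (hpos : 0 < N) (δ v : ℕ) : crt N δ v < 4 * N := Nat.mod_lt _ (by omega)

lemma coprime_four (hN : Odd N) : Nat.Coprime 4 N := by
  have h2 : Nat.Coprime 2 N := (Nat.Prime.coprime_iff_not_dvd Nat.prime_two).mpr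
    (by rw [Nat.odd_iff] at hN; omega)
  have : (4 : ℕ) = 2 ^ 2 := by norm_num
  rw [this]
  exact Nat.Coprime.pow_left _ h2

lemma crt_gcd (hN : Odd N) (hpos : 0 < N) {δ v : ℕ} (hδ : δ = 1 ∨ δ = 3)
    (hv : v < N) (hg : Nat.gcd (4 * v) N = 1) : Nat.gcd (crt N δ v) (4 * N) = 1 := by
  have hvN : Nat.Coprime v N := Nat.Coprime.coprime_dvd_left ⟨4, by ring⟩ hg
  have h4 : Nat.Coprime (crt N δ v) 4 := by
    have : Nat.gcd (crt N δ v) 4 = Nat.gcd (crt N δ v % 4) 4 := by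
      rw [Nat.gcd_comm, Nat.gcd_rec, Nat.gcd_comm]
    unfold Nat.Coprime
    rw [this, crt_mod_four hN hpos]
    rcases hδ with rfl | rfl <;> norm_num
  have hNc : Nat.Coprime (crt N δ v) N := by
    have : Nat.gcd (crt N δ v) N = Nat.gcd (crt N δ v % N) N := by
      rw [Nat.gcd_comm, Nat.gcd_rec, Nat.gcd_comm]
    unfold Nat.Coprime
    rw [this, crt_mod_N hN hpos _ hv]
    exact hvN
  exact Nat.Coprime.mul_right h4 hNc

lemma term_eq (hN : Odd N) (hpos : 0 < N) (m n : ℤ) {δ v : ℕ}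
    (hδ : δ = 1 ∨ δ = 3) (hv : v < N) (hg : Nat.gcd (4 * v) N = 1) :
    epsFactor (crt N δ v) ^ 3 *
      ((jacobiSym (2 * ((2 * N : ℕ) : ℤ)) (crt N δ v) : ℤ) : ℂ) ^ 3 *
      ee (((m * (((crt N δ v : ℕ) : ZMod (2 * (2 * N))))⁻¹.val + 4 * n * (crt N δ v) : ℤ) : ℂ) /
        (2 * ((2 * N : ℕ) : ℂ)))
    = (epsFactor δ ^ 3 * (if N % 4 = 3 ∧ δ = 3 then (-1 : ℂ) else 1) *
        ee (((m * δ * N : ℤ) : ℂ) / 4)) *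
      (((jacobiSym (2 * ((2 * v : ℕ) : ℤ)) N : ℤ) : ℂ) ^ 3 *
        ee (((m * ((2 * (((4 * v : ℕ) : ZMod N))⁻¹.val) : ℕ) + n * ((2 * v : ℕ)) : ℤ) : ℂ) /
          (2 * ((N : ℕ) : ℂ)))) := by
  haveI : NeZero N := ⟨hpos.ne'⟩
  haveI : NeZero (2 * (2 * N)) := ⟨by omega⟩
  set d := crt N δ v with hdd
  have hδ4 : δ < 4 := by rcases hδ with rfl | rfl <;> omega
  have hd4 : d % 4 = δ := by rw [hdd, crt_mod_four hN hpos, Nat.mod_eq_of_lt hδ4]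
  have hdN : d % N = v := crt_mod_N hN hpos _ hv
  have hgcd : Nat.gcd d (4 * N) = 1 := crt_gcd hN hpos hδ hv hg

  have hgcd' : Nat.gcd d (2 * (2 * N)) = 1 := by
    have h22 : 2 * (2 * N) = 4 * N := by ring
    rw [h22]; exact hgcd
  have hdodd : d % 2 = 1 := by omega
  have hNodd2 : N % 2 = 1 := Nat.odd_iff.mp hN
  set a := (((d : ℕ) : ZMod (2 * (2 * N))))⁻¹.val with haa
  set u := ((((4 * v : ℕ) : ZMod N))⁻¹).val with huu
  -- epsilon factor
  have heps : epsFactor d = epsFactor δ := by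
    unfold epsFactor; rw [hd4]; rcases hδ with rfl | rfl <;> norm_num
  -- jacobi symbol
  have hg2d : Int.gcd 2 (d : ℤ) = 1 := by
    have : Nat.gcd 2 d = 1 := by
      rw [Nat.gcd_rec]; simp [hdodd]
    simpa [Int.gcd] using this
  have hg2N : Int.gcd 2 (N : ℤ) = 1 := by
    have : Nat.gcd 2 N = 1 := by
      rw [Nat.gcd_rec]; simp [hNodd2]
    simpa [Int.gcd] using this
  have h4d : jacobiSym 4 d = 1 := by
    have h44 : (4 : ℤ) = 2 ^ 2 := by norm_num
    rw [h44, jacobiSym.sq_one' hg2d]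
  have h4N : jacobiSym 4 N = 1 := by
    have h44 : (4 : ℤ) = 2 ^ 2 := by norm_num
    rw [h44, jacobiSym.sq_one' hg2N]
  have hL : jacobiSym (2 * ((2 * N : ℕ) : ℤ)) d = jacobiSym (N : ℤ) d := by
    have e1 : (2 * ((2 * N : ℕ) : ℤ)) = (4 : ℤ) * (N : ℤ) := by push_cast; ring
    rw [e1, jacobiSym.mul_left, h4d, one_mul]
  have hR : jacobiSym (2 * ((2 * v : ℕ) : ℤ)) N = jacobiSym (v : ℤ) N := by
    have e1 : (2 * ((2 * v : ℕ) : ℤ)) = (4 : ℤ) * (v : ℤ) := by push_cast; ring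
    rw [e1, jacobiSym.mul_left, h4N, one_mul]
  have hmodl : jacobiSym (d : ℤ) N = jacobiSym (v : ℤ) N := by
    refine jacobiSym.mod_left' ?_
    rw [← Int.natCast_mod, ← Int.natCast_mod, hdN, Nat.mod_eq_of_lt hv]
  have hdoddO : Odd d := Nat.odd_iff.mpr hdodd
  have hN4 : N % 4 = 1 ∨ N % 4 = 3 := by omega
  have hjac : jacobiSym (2 * ((2 * N : ℕ) : ℤ)) d
      = (if N % 4 = 3 ∧ δ = 3 then (-1 : ℤ) else 1) * jacobiSym (2 * ((2 * v : ℕ) : ℤ)) N := by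
    rw [hL, hR]
    rcases hδ with hδ1 | hδ3
    · have : jacobiSym (d : ℤ) N = jacobiSym (N : ℤ) d :=
        jacobiSym.quadratic_reciprocity_one_mod_four (by omega) hN
      rw [← this, hmodl, if_neg (by omega), one_mul]
    · rcases hN4 with h1 | h3
      · have : jacobiSym (N : ℤ) d = jacobiSym (d : ℤ) N :=
          jacobiSym.quadratic_reciprocity_one_mod_four h1 hdoddO
        rw [this, hmodl, if_neg (by omega), one_mul]
      · have : jacobiSym (N : ℤ) d = -jacobiSym (d : ℤ) N :=
          jacobiSym.quadratic_reciprocity_three_mod_four h3 (by omega)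
        rw [this, hmodl, if_pos ⟨h3, hδ3⟩, neg_one_mul]
  -- the exponential identity
  have hcasta : ((a : ℕ) : ZMod (2 * (2 * N))) = ((d : ZMod (2 * (2 * N))))⁻¹ :=
    ZMod.natCast_rightInverse _
  have hunitd : (d : ZMod (2 * (2 * N))) * ((d : ZMod (2 * (2 * N))))⁻¹ = 1 :=
    ZMod.coe_mul_inv_eq_one d hgcd'
  have had : a * d ≡ 1 [MOD 4 * N] := by
    rw [show 4 * N = 2 * (2 * N) by ring]
    refine (ZMod.natCast_eq_natCast_iff _ _ _).mp ?_
    push_cast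
    rw [hcasta]
    linear_combination hunitd
  have had4 : a * d ≡ 1 [MOD 4] := had.of_dvd ⟨N, rfl⟩
  have hdδ4 : d ≡ δ [MOD 4] := by
    show d % 4 = δ % 4
    omega
  have hδδ : δ * δ ≡ 1 [MOD 4] := by
    show δ * δ % 4 = 1 % 4
    rcases hδ with rfl | rfl <;> norm_num
  have haδ : a * δ ≡ 1 [MOD 4] := ((Nat.ModEq.mul_left a hdδ4).symm).trans had4
  have hA4 : a ≡ δ [MOD 4] := by
    calc a = a * 1 := (mul_one a).symm
      _ ≡ a * (δ * δ) [MOD 4] := (Nat.ModEq.mul_left a hδδ).symm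
      _ = (a * δ) * δ := by ring
      _ ≡ 1 * δ [MOD 4] := haδ.mul_right δ
      _ = δ := one_mul δ
  have hadN : a * d ≡ 1 [MOD N] := had.of_dvd ⟨4, by ring⟩
  have hdvN : d ≡ v [MOD N] := by
    show d % N = v % N
    rw [hdN, Nat.mod_eq_of_lt hv]
  have hcastu : ((u : ℕ) : ZMod N) = (((4 * v : ℕ) : ZMod N))⁻¹ := ZMod.natCast_rightInverse _
  have hunitv : ((4 * v : ℕ) : ZMod N) * (((4 * v : ℕ) : ZMod N))⁻¹ = 1 :=
    ZMod.coe_mul_inv_eq_one _ hg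
  have hZ1 : ((a : ℕ) : ZMod N) * ((d : ℕ) : ZMod N) = 1 := by
    have := (ZMod.natCast_eq_natCast_iff _ _ _).mpr hadN
    push_cast at this
    simpa using this
  have hZ2 : ((d : ℕ) : ZMod N) = ((v : ℕ) : ZMod N) := (ZMod.natCast_eq_natCast_iff _ _ _).mpr hdvN
  have hx4 : ((4 * v : ℕ) : ZMod N) = 4 * ((v : ℕ) : ZMod N) := by push_cast; ring
  have hgoalN : ((a : ℕ) : ZMod N) = ((4 * u : ℕ) : ZMod N) := by
    calc ((a : ℕ) : ZMod N)
        = (a : ZMod N) * (((4 * v : ℕ) : ZMod N) * (((4 * v : ℕ) : ZMod N))⁻¹) := by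
          rw [hunitv, mul_one]
      _ = ((a : ZMod N) * ((v : ℕ) : ZMod N)) * 4 * (((4 * v : ℕ) : ZMod N))⁻¹ := by
          rw [hx4]; ring
      _ = ((a : ZMod N) * ((d : ℕ) : ZMod N)) * 4 * (((4 * v : ℕ) : ZMod N))⁻¹ := by
          rw [hZ2]
      _ = 4 * (((4 * v : ℕ) : ZMod N))⁻¹ := by rw [hZ1]; ring
      _ = 4 * ((u : ℕ) : ZMod N) := by rw [hcastu]
      _ = ((4 * u : ℕ) : ZMod N) := by push_cast; ring
  have hAN : a ≡ 4 * u [MOD N] := (ZMod.natCast_eq_natCast_iff _ _ _).mp hgoalN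
  have hB4 : δ * (N * N) + 4 * u ≡ δ [MOD 4] := by
    obtain ⟨t, ht⟩ := hN
    have h6 : δ * (N * N) + 4 * u = 4 * (δ * (t * t + t) + u) + δ := by subst ht; ring
    show _ % 4 = δ % 4
    omega
  have hBN : δ * (N * N) + 4 * u ≡ 4 * u [MOD N] := by
    have h6 : δ * (N * N) + 4 * u = N * (δ * N) + 4 * u := by ring
    show _ % N = _ % N
    rw [h6, Nat.mul_add_mod]
  have hAfull : a ≡ δ * (N * N) + 4 * u [MOD 4 * N] :=
    (Nat.modEq_and_modEq_iff_modEq_mul (coprime_four hN)).mp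
      ⟨hA4.trans hB4.symm, hAN.trans hBN.symm⟩
  have hAint : (a : ℤ) ≡ (δ : ℤ) * (N * N) + 4 * u [ZMOD ((4 * N : ℕ) : ℤ)] := by
    have := Int.natCast_modEq_iff.mpr hAfull
    push_cast at this ⊢
    convert this using 2 <;> push_cast <;> ring
  have hdvint : (d : ℤ) ≡ (v : ℤ) [ZMOD ((N : ℕ) : ℤ)] := Int.natCast_modEq_iff.mpr hdvN
  have key : (m * a + 4 * n * d : ℤ) % ((4 * N : ℕ) : ℤ)
      = ((m * δ * N) * N + 2 * (m * (2 * u) + n * (2 * v)) : ℤ) % ((4 * N : ℕ) : ℤ) := by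
    have k1 : m * (a : ℤ) ≡ m * ((δ : ℤ) * (N * N) + 4 * u) [ZMOD ((4 * N : ℕ) : ℤ)] :=
      hAint.mul_left m
    have k2 : (4 : ℤ) * (n * d) ≡ 4 * (n * v) [ZMOD (4 : ℤ) * ((N : ℕ) : ℤ)] :=
      (hdvint.mul_left n).mul_left' (c := 4)
    have k2' : (4 : ℤ) * (n * d) ≡ 4 * (n * v) [ZMOD ((4 * N : ℕ) : ℤ)] := by
      have e : ((4 * N : ℕ) : ℤ) = (4 : ℤ) * ((N : ℕ) : ℤ) := by push_cast; ring
      rw [e]; exact k2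
    have k3 := k1.add k2'
    have e1 : (m * a + 4 * n * d : ℤ) = m * (a : ℤ) + 4 * (n * d) := by ring
    have e2 : ((m * δ * N) * N + 2 * (m * (2 * u) + n * (2 * v)) : ℤ)
        = m * ((δ : ℤ) * (N * N) + 4 * u) + 4 * (n * v) := by push_cast; ring
    rw [e1, e2]
    exact k3
  have hee : ee (((m * a + 4 * n * d : ℤ) : ℂ) / (2 * ((2 * N : ℕ) : ℂ)))
      = ee (((m * δ * N : ℤ) : ℂ) / 4) *
        ee (((m * (2 * u) + n * (2 * v) : ℤ) : ℂ) / (2 * ((N : ℕ) : ℂ))) := by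
    have hN0 : ((N : ℕ) : ℂ) ≠ 0 := Nat.cast_ne_zero.mpr hpos.ne'
    have hden1 : (2 * ((2 * N : ℕ) : ℂ)) = ((4 * N : ℕ) : ℂ) := by push_cast; ring
    have hY : ((m * δ * N : ℤ) : ℂ) / 4
        = (((m * δ * N) * N : ℤ) : ℂ) / ((4 * N : ℕ) : ℂ) := by
      push_cast; field_simp
    have hZc : ((m * (2 * u) + n * (2 * v) : ℤ) : ℂ) / (2 * ((N : ℕ) : ℂ))
        = ((2 * (m * (2 * u) + n * (2 * v)) : ℤ) : ℂ) / ((4 * N : ℕ) : ℂ) := by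
      push_cast; field_simp; ring
    rw [hden1, hY, hZc, ← ee_add]
    have hsum : (((m * δ * N) * N : ℤ) : ℂ) / ((4 * N : ℕ) : ℂ)
        + ((2 * (m * (2 * u) + n * (2 * v)) : ℤ) : ℂ) / ((4 * N : ℕ) : ℂ)
        = ((((m * δ * N) * N + 2 * (m * (2 * u) + n * (2 * v))) : ℤ) : ℂ) / ((4 * N : ℕ) : ℂ) := by
      rw [← add_div]; push_cast; ring
    rw [hsum]
    exact ee_congr_int (by omega) key
  -- assemble
  rw [heps, hee, hjac]
  rcases hN4 with h1 | h3
  · rw [if_neg (by omega), if_neg (by omega)]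
    push_cast
    ring
  · by_cases hδ3 : δ = 3
    · rw [if_pos ⟨h3, hδ3⟩, if_pos ⟨h3, hδ3⟩]
      push_cast
      ring
    · rw [if_neg (by tauto), if_neg (by tauto)]
      push_cast
      ring

lemma ee_nat_mul (k : ℕ) (x : ℂ) : ee ((k : ℂ) * x) = ee x ^ k := by
  simp [ee, ← Complex.exp_nat_mul]; ring_nf

lemma ee_quarter : ee (1 / 4) = Complex.I := by
  have h : (2 * (π : ℂ) * Complex.I * (1 / 4)) = ((π / 2 : ℝ) : ℂ) * Complex.I := by
    push_cast; ring
  rw [ee, h, Complex.exp_mul_I, ← Complex.ofReal_cos, ← Complex.ofReal_sin,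
    Real.cos_pi_div_two, Real.sin_pi_div_two]
  simp

lemma ee_38 : ee (3 / 8) = (Real.sqrt 2 / 2 : ℝ) * (-1 + Complex.I) := by
  have h : (2 * (π : ℂ) * Complex.I * (3 / 8)) = ((π - π / 4 : ℝ) : ℂ) * Complex.I := by
    push_cast; ring
  rw [ee, h, Complex.exp_mul_I, ← Complex.ofReal_cos, ← Complex.ofReal_sin,
    Real.cos_pi_sub, Real.sin_pi_sub, Real.cos_pi_div_four, Real.sin_pi_div_four]
  push_cast; ring

lemma ee_zero : ee 0 = 1 := by simp [ee]

lemma ee_half : ee (2 / 4) = -1 := by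
  have h : (2 / 4 : ℂ) = (2 : ℕ) * (1 / 4) := by norm_num
  rw [h, ee_nat_mul, ee_quarter]; simp [Complex.I_sq]

lemma ee_34 : ee (3 / 4) = -Complex.I := by
  have h : (3 / 4 : ℂ) = (3 : ℕ) * (1 / 4) := by norm_num
  rw [h, ee_nat_mul, ee_quarter, pow_succ, Complex.I_sq]; ring


lemma gcd_one_of_mul_modEq_one {g M x : ℕ} (hMpos : 0 < M) (hgd : g ∣ x) (hgM : g ∣ M)
    (h : x ≡ 1 [MOD M]) : g = 1 := by
  have hgpos : 0 < g := Nat.pos_of_dvd_of_pos hgM hMpos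
  have h2 : x ≡ 1 [MOD g] := h.of_dvd hgM
  have h3 : x % g = 0 := Nat.mod_eq_zero_of_dvd hgd
  have h4 : 1 % g = 0 := by rw [← h2]; exact h3
  exact Nat.dvd_one.mp (Nat.dvd_of_mod_eq_zero h4)

lemma collapse {M : ℕ} (hM : 2 ≤ M) (f : ℕ → ℕ → ℂ) :
    ∑ d ∈ Finset.Ico 1 M, ∑ a ∈ Finset.Ico 1 M, (if (a * d) % M = 1 then f a d else 0)
    = ∑ d ∈ Finset.Ico 1 M,
        (if Nat.gcd d M = 1 then f (((d : ZMod M))⁻¹.val) d else 0) := by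
  haveI : NeZero M := ⟨by omega⟩
  haveI : Fact (1 < M) := ⟨by omega⟩
  refine Finset.sum_congr rfl fun d hd => ?_
  by_cases hg : Nat.gcd d M = 1
  · set a0 := ((d : ZMod M))⁻¹.val with ha0
    have hunit : (d : ZMod M) * ((d : ZMod M))⁻¹ = 1 := ZMod.coe_mul_inv_eq_one d hg
    have hcast : ((a0 : ℕ) : ZMod M) = ((d : ZMod M))⁻¹ := ZMod.natCast_rightInverse _
    have ha0M : a0 < M := ZMod.val_lt _
    have ha0pos : 1 ≤ a0 := by
      rcases Nat.eq_zero_or_pos a0 with h0 | h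
      · exfalso
        have : ((d : ZMod M))⁻¹ = 0 := by rw [← hcast, h0]; simp
        rw [this, mul_zero] at hunit
        exact one_ne_zero hunit.symm
      · exact h
    have hmem : a0 ∈ Finset.Ico 1 M := Finset.mem_Ico.mpr ⟨ha0pos, ha0M⟩
    have key : ∀ a, a ∈ Finset.Ico 1 M → ((a * d) % M = 1 ↔ a = a0) := by
      intro a ha
      rw [Finset.mem_Ico] at ha
      constructor
      · intro had
        have h1M : 1 % M = 1 := Nat.mod_eq_of_lt (by omega)
        have : ((a * d : ℕ) : ZMod M) = ((1 : ℕ) : ZMod M) := by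
          rw [ZMod.natCast_eq_natCast_iff']
          simpa [h1M] using had
        push_cast at this
        have haz : (a : ZMod M) = ((d : ZMod M))⁻¹ := by
          calc (a : ZMod M) = (a : ZMod M) * ((d : ZMod M) * ((d : ZMod M))⁻¹) := by
                rw [hunit, mul_one]
            _ = ((a : ZMod M) * (d : ZMod M)) * ((d : ZMod M))⁻¹ := by ring
            _ = ((d : ZMod M))⁻¹ := by rw [this, one_mul]
        have := congrArg ZMod.val haz
        rwa [ZMod.val_cast_of_lt ha.2] at this
      · rintro rfl
        have : ((a0 * d : ℕ) : ZMod M) = ((1 : ℕ) : ZMod M) := by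
          push_cast
          rw [hcast, mul_comm, hunit]
        rw [ZMod.natCast_eq_natCast_iff'] at this
        simpa [Nat.mod_eq_of_lt (show 1 < M by omega)] using this
    rw [if_pos hg]
    rw [Finset.sum_eq_single_of_mem a0 hmem]
    · rw [if_pos ((key a0 hmem).mpr rfl)]
    · intro b hb hne
      exact if_neg (fun hc => hne ((key b hb).mp hc))
  · rw [if_neg hg]
    refine Finset.sum_eq_zero fun a _ => ?_
    refine if_neg fun hc => hg ?_
    have hmod : a * d ≡ 1 [MOD M] := by
      show (a * d) % M = 1 % M
      rw [hc, Nat.mod_eq_of_lt (show 1 < M by omega)]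
    exact gcd_one_of_mul_modEq_one (by omega) (Dvd.dvd.mul_left (Nat.gcd_dvd_left d M) a)
      (Nat.gcd_dvd_right d M) hmod

lemma collapse' {M M' : ℕ} (hM : 2 ≤ M) (hMM : M' = M) (f : ℕ → ℕ → ℂ) :
    ∑ d ∈ Finset.Ico 1 M, ∑ a ∈ Finset.Ico 1 M, (if (a * d) % M = 1 then f a d else 0)
    = ∑ d ∈ Finset.Ico 1 M',
        (if Nat.gcd d M' = 1 then f (((d : ZMod M))⁻¹.val) d else 0) := by
  subst hMM; exact collapse hM f

lemma sum_range_even {N : ℕ} (h : ℕ → ℂ) (h0 : ∀ d, d % 2 = 1 → h d = 0) :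
    ∑ d ∈ Finset.range (2 * N), h d = ∑ v ∈ Finset.range N, h (2 * v) := by
  induction N with
  | zero => simp
  | succ N ih =>
      have e1 : 2 * (N + 1) = (2 * N + 1) + 1 := by ring
      rw [e1, Finset.sum_range_succ, Finset.sum_range_succ, ih, Finset.sum_range_succ,
        h0 (2 * N + 1) (by omega), add_zero]

lemma collapseOdd {N : ℕ} (hpos : 0 < N) (g : ℕ → ℕ → ℂ) :
    ∑ d ∈ Finset.range (2 * N), ∑ a ∈ Finset.range (2 * N),
      (if d % 2 = 0 ∧ a % 2 = 0 ∧ (a * d) % N = 1 % N then g a d else 0)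
    = ∑ v ∈ Finset.range N,
        (if Nat.gcd (4 * v) N = 1 then
          g (2 * (((4 * v : ℕ) : ZMod N))⁻¹.val) (2 * v) else 0) := by
  haveI : NeZero N := ⟨hpos.ne'⟩
  rw [sum_range_even _ (fun d hd => by
    refine Finset.sum_eq_zero fun a _ => if_neg ?_
    rintro ⟨h1, -⟩; omega)]
  refine Finset.sum_congr rfl fun v hv => ?_
  rw [sum_range_even _ (fun a ha => by
    refine if_neg ?_
    rintro ⟨-, h2, -⟩; omega)]
  by_cases hg : Nat.gcd (4 * v) N = 1
  · set x : ZMod N := ((4 * v : ℕ) : ZMod N) with hx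
    set u0 := x⁻¹.val with hu0
    have hunit : x * x⁻¹ = 1 := ZMod.coe_mul_inv_eq_one _ hg
    have hcast : ((u0 : ℕ) : ZMod N) = x⁻¹ := ZMod.natCast_rightInverse _
    have hu0N : u0 < N := ZMod.val_lt _
    have hmem : u0 ∈ Finset.range N := Finset.mem_range.mpr hu0N
    have key : ∀ u, u ∈ Finset.range N → ((2 * u * (2 * v)) % N = 1 % N ↔ u = u0) := by
      intro u hu
      rw [Finset.mem_range] at hu
      constructor
      · intro hc
        have : ((2 * u * (2 * v) : ℕ) : ZMod N) = ((1 : ℕ) : ZMod N) := by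
          rw [ZMod.natCast_eq_natCast_iff']
          simpa using hc
        push_cast at this
        have h4 : (u : ZMod N) * x = 1 := by
          rw [hx]; push_cast; linear_combination this
        have huz : (u : ZMod N) = x⁻¹ := by
          calc (u : ZMod N) = (u : ZMod N) * (x * x⁻¹) := by rw [hunit, mul_one]
            _ = ((u : ZMod N) * x) * x⁻¹ := by ring
            _ = x⁻¹ := by rw [h4, one_mul]
        have := congrArg ZMod.val huz
        rwa [ZMod.val_cast_of_lt hu] at this
      · rintro rfl
        have h6 : (u0 : ZMod N) * x = 1 := by rw [hcast, mul_comm, hunit]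
        have : ((2 * u0 * (2 * v) : ℕ) : ZMod N) = ((1 : ℕ) : ZMod N) := by
          push_cast
          rw [hx] at h6; push_cast at h6
          linear_combination h6
        rw [ZMod.natCast_eq_natCast_iff'] at this
        simpa using this
    rw [if_pos hg]
    rw [Finset.sum_eq_single_of_mem u0 hmem]
    · rw [if_pos ⟨by omega, by omega, (key u0 hmem).mpr rfl⟩]
    · intro b hb hne
      refine if_neg fun hc => hne ((key b hb).mp hc.2.2)
  · rw [if_neg hg]
    refine Finset.sum_eq_zero fun u _ => ?_
    refine if_neg ?_
    rintro ⟨-, -, hc⟩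
    apply hg
    have hmod : 2 * u * (2 * v) ≡ 1 [MOD N] := hc
    refine gcd_one_of_mul_modEq_one hpos ?_ (Nat.gcd_dvd_right _ _) hmod
    have : 2 * u * (2 * v) = u * (4 * v) := by ring
    rw [this]
    exact Dvd.dvd.mul_left (Nat.gcd_dvd_left _ _) u

lemma crt_self (hN : Odd N) (hpos : 0 < N) {d : ℕ} (hd : d < 4 * N) (hodd : d % 2 = 1) :
    crt N (d % 4) (d % N) = d := by
  have h1 : crt N (d % 4) (d % N) ≡ d [MOD 4] := by
    show _ % 4 = _ % 4
    rw [crt_mod_four hN hpos, Nat.mod_mod_of_dvd d (dvd_refl 4)]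
  have h2 : crt N (d % 4) (d % N) ≡ d [MOD N] := by
    show _ % N = _ % N
    rw [crt_mod_N hN hpos _ (Nat.mod_lt _ hpos)]
  have h3 : crt N (d % 4) (d % N) ≡ d [MOD 4 * N] :=
    (Nat.modEq_and_modEq_iff_modEq_mul (coprime_four hN)).mp ⟨h1, h2⟩
  have h4 := h3
  unfold Nat.ModEq at h4
  rw [Nat.mod_eq_of_lt (crt_lt hpos _ _), Nat.mod_eq_of_lt hd] at h4
  exact h4


lemma reindex {N : ℕ} (hN : Odd N) (hpos : 0 < N) (F : ℕ → ℂ) :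
    ∑ d ∈ Finset.Ico 1 (4 * N), (if Nat.gcd d (4 * N) = 1 then F d else 0)
    = ∑ δ ∈ ({1, 3} : Finset ℕ), ∑ v ∈ Finset.range N,
        (if Nat.gcd (4 * v) N = 1 then F (crt N δ v) else 0) := by
  rw [← Finset.sum_product']
  rw [← Finset.sum_filter, ← Finset.sum_filter]
  refine Finset.sum_nbij' (fun d => (d % 4, d % N)) (fun p => crt N p.1 p.2) ?_ ?_ ?_ ?_ ?_
  · intro d hd
    simp only [Finset.mem_filter, Finset.mem_Ico] at hd
    obtain ⟨⟨hd1, hd2⟩, hdg⟩ := hd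
    have hodd : d % 2 = 1 := by
      rcases Nat.even_or_odd d with he | ho
      · exfalso
        obtain ⟨k, hk⟩ := he
        have h2d : (2 : ℕ) ∣ Nat.gcd d (4 * N) :=
          Nat.dvd_gcd ⟨k, by omega⟩ ⟨2 * N, by ring⟩
        omega
      · rw [Nat.odd_iff] at ho; exact ho
    simp only [Finset.mem_filter, Finset.mem_product, Finset.mem_insert,
      Finset.mem_singleton, Finset.mem_range]
    refine ⟨⟨by omega, Nat.mod_lt _ hpos⟩, ?_⟩
    have hdN : Nat.Coprime (d % N) N := by
      have hc : Nat.Coprime d N := Nat.Coprime.coprime_dvd_right ⟨4, by ring⟩ hdg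
      have : Nat.gcd (d % N) N = Nat.gcd d N := by
        rw [← Nat.gcd_rec N d, Nat.gcd_comm]
      unfold Nat.Coprime; rw [this]; exact hc
    exact Nat.Coprime.mul (coprime_four hN) hdN
  · intro p hp
    simp only [Finset.mem_filter, Finset.mem_product, Finset.mem_insert,
      Finset.mem_singleton, Finset.mem_range] at hp
    obtain ⟨⟨hδ, hv⟩, hg⟩ := hp
    simp only [Finset.mem_filter, Finset.mem_Ico]
    have hc := crt_gcd hN hpos hδ hv hg
    refine ⟨⟨?_, crt_lt hpos _ _⟩, hc⟩
    have := crt_mod_four hN hpos p.1 p.2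
    rcases hδ with h | h <;> omega
  · intro d hd
    simp only [Finset.mem_filter, Finset.mem_Ico] at hd
    obtain ⟨⟨hd1, hd2⟩, hdg⟩ := hd
    have hodd : d % 2 = 1 := by
      rcases Nat.even_or_odd d with he | ho
      · exfalso
        obtain ⟨k, hk⟩ := he
        have h2d : (2 : ℕ) ∣ Nat.gcd d (4 * N) :=
          Nat.dvd_gcd ⟨k, by omega⟩ ⟨2 * N, by ring⟩
        omega
      · rw [Nat.odd_iff] at ho; exact ho
    exact crt_self hN hpos hd2 hodd
  · intro p hp
    simp only [Finset.mem_filter, Finset.mem_product, Finset.mem_insert,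
      Finset.mem_singleton, Finset.mem_range] at hp
    obtain ⟨⟨hδ, hv⟩, hg⟩ := hp
    have h1 : crt N p.1 p.2 % 4 = p.1 := by
      rw [crt_mod_four hN hpos]; rcases hδ with h | h <;> omega
    have h2 : crt N p.1 p.2 % N = p.2 := crt_mod_N hN hpos _ hv
    exact Prod.ext h1 h2
  · intro d hd
    simp only [Finset.mem_filter, Finset.mem_Ico] at hd
    obtain ⟨⟨hd1, hd2⟩, hdg⟩ := hd
    have hodd : d % 2 = 1 := by
      rcases Nat.even_or_odd d with he | ho
      · exfalso
        obtain ⟨k, hk⟩ := he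
        have h2d : (2 : ℕ) ∣ Nat.gcd d (4 * N) :=
          Nat.dvd_gcd ⟨k, by omega⟩ ⟨2 * N, by ring⟩
        omega
      · rw [Nat.odd_iff] at ho; exact ho
    rw [crt_self hN hpos hd2 hodd]

lemma hsq2 : ((Real.sqrt 2 : ℝ) : ℂ) * ((Real.sqrt 2 : ℝ) : ℂ) = 2 := by
  rw [← Complex.ofReal_mul, Real.mul_self_sqrt (by norm_num : (0:ℝ) ≤ 2)]
  norm_num

lemma ee_div4 {x : ℤ} (k : ℕ) (h : x % 4 = (k : ℤ) % 4) : ee ((x : ℂ) / 4) = Complex.I ^ k := by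
  have h2 := ee_congr_int (M := 4) (by norm_num) (x := x) (y := (k : ℤ)) (by exact_mod_cast h)
  have h4 : ((4 : ℕ) : ℂ) = 4 := by norm_num
  rw [h4] at h2
  rw [h2]
  have h3 : (((k : ℤ)) : ℂ) / 4 = (k : ℂ) * (1 / 4) := by push_cast; ring
  rw [h3, ee_nat_mul, ee_quarter]

lemma const_sum {N : ℕ} (hN : Odd N) (m : ℤ) :
    epsFactor 1 ^ 3 * (if N % 4 = 3 ∧ (1 : ℕ) = 3 then (-1 : ℂ) else 1) *
        ee (((m * (1 : ℕ) * N : ℤ) : ℂ) / 4)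
      + epsFactor 3 ^ 3 * (if N % 4 = 3 ∧ (3 : ℕ) = 3 then (-1 : ℂ) else 1) *
        ee (((m * (3 : ℕ) * N : ℤ) : ℂ) / 4)
    = (if m % 4 = 0 ∨ m % 4 = 3 then -1 else 1) * ((Real.sqrt 2 : ℝ) : ℂ) *
      (ee (((3 : ℕ) : ℂ) / 8) * (epsFactor N)⁻¹ ^ 3) := by
  have h1 : epsFactor 1 = 1 := by norm_num [epsFactor]
  have h3 : epsFactor 3 = Complex.I := by norm_num [epsFactor]
  have hI3 : Complex.I ^ 3 = -Complex.I := by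
    rw [pow_succ, Complex.I_sq]; ring
  have hJ : Complex.I * Complex.I = -1 := Complex.I_mul_I
  have h38 : ee (((3 : ℕ) : ℂ) / 8) = ((Real.sqrt 2 / 2 : ℝ) : ℂ) * (-1 + Complex.I) := by
    rw [show ((3 : ℕ) : ℂ) = 3 by norm_num]; exact ee_38
  have hN2 : N % 2 = 1 := Nat.odd_iff.mp hN
  have hN4 : N % 4 = 1 ∨ N % 4 = 3 := by omega
  have hm4 : m % 4 = 0 ∨ m % 4 = 1 ∨ m % 4 = 2 ∨ m % 4 = 3 := by omega
  have hinvI : (Complex.I⁻¹) ^ 3 = Complex.I := by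
    rw [Complex.inv_I, show (-Complex.I) ^ 3 = -(Complex.I ^ 3) by ring, hI3]; ring
  have hmod : ∀ (δ : ℕ) (r s : ℤ), m % 4 = r % 4 → (N : ℤ) % 4 = s % 4 →
      (m * (δ : ℕ) * N : ℤ) % 4 = (r * (δ : ℕ) * s) % 4 := fun δ r s hr hs =>
    Int.ModEq.mul (Int.ModEq.mul hr (Int.ModEq.refl ((δ : ℕ) : ℤ))) hs
  rw [h1, h3, h38, if_neg (by omega : ¬(N % 4 = 3 ∧ (1:ℕ) = 3))]
  rcases hN4 with hc4 | hc4
  · have hεN : epsFactor N = 1 := by simp [epsFactor, hc4]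
    have hsN : (N : ℤ) % 4 = 1 % 4 := by omega
    rw [hεN, inv_one, one_pow, if_neg (by omega : ¬(N % 4 = 3 ∧ (3:ℕ) = 3))]
    rcases hm4 with hmr | hmr | hmr | hmr
    · rw [ee_div4 0 ((hmod 1 0 1 (by omega) hsN).trans (by norm_num)),
        ee_div4 0 ((hmod 3 0 1 (by omega) hsN).trans (by norm_num)),
        if_pos (Or.inl hmr)]
      push_cast
      linear_combination ((-1 + Complex.I) / 2) * hsq2 + Complex.I * hJ
    · rw [ee_div4 1 ((hmod 1 1 1 (by omega) hsN).trans (by norm_num)),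
        ee_div4 3 ((hmod 3 1 1 (by omega) hsN).trans (by norm_num)),
        if_neg (by omega)]
      push_cast
      linear_combination ((1 - Complex.I) / 2) * hsq2 +
        (Complex.I ^ 2 * Complex.I ^ 2 - Complex.I ^ 2 + 1) * hJ
    · rw [ee_div4 2 ((hmod 1 2 1 (by omega) hsN).trans (by norm_num)),
        ee_div4 2 ((hmod 3 2 1 (by omega) hsN).trans (by norm_num)),
        if_neg (by omega)]
      push_cast
      linear_combination ((1 - Complex.I) / 2) * hsq2 +
        (1 + Complex.I ^ 3 - Complex.I) * hJ
    · rw [ee_div4 3 ((hmod 1 3 1 (by omega) hsN).trans (by norm_num)),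
        ee_div4 1 ((hmod 3 3 1 (by omega) hsN).trans (by norm_num)),
        if_pos (Or.inr hmr)]
      push_cast
      linear_combination ((-1 + Complex.I) / 2) * hsq2 +
        (Complex.I + Complex.I ^ 2 - 1) * hJ
  · have hεN : epsFactor N = Complex.I := by
      have : ¬(N % 4 = 1) := by omega
      simp [epsFactor, this]
    have hsN : (N : ℤ) % 4 = 3 % 4 := by omega
    rw [hεN, hinvI, if_pos ⟨hc4, rfl⟩]
    rcases hm4 with hmr | hmr | hmr | hmr
    · rw [ee_div4 0 ((hmod 1 0 3 (by omega) hsN).trans (by norm_num)),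
        ee_div4 0 ((hmod 3 0 3 (by omega) hsN).trans (by norm_num)),
        if_pos (Or.inl hmr)]
      push_cast
      linear_combination ((-1 + Complex.I) * Complex.I / 2) * hsq2 + (1 - Complex.I) * hJ
    · rw [ee_div4 3 ((hmod 1 1 3 (by omega) hsN).trans (by norm_num)),
        ee_div4 1 ((hmod 3 1 3 (by omega) hsN).trans (by norm_num)),
        if_neg (by omega)]
      push_cast
      linear_combination (-(-1 + Complex.I) * Complex.I / 2) * hsq2 +
        (Complex.I - Complex.I ^ 2) * hJ
    · rw [ee_div4 2 ((hmod 1 2 3 (by omega) hsN).trans (by norm_num)),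
        ee_div4 2 ((hmod 3 2 3 (by omega) hsN).trans (by norm_num)),
        if_neg (by omega)]
      push_cast
      linear_combination (-(-1 + Complex.I) * Complex.I / 2) * hsq2 +
        (-Complex.I ^ 3 + Complex.I) * hJ
    · rw [ee_div4 1 ((hmod 1 3 3 (by omega) hsN).trans (by norm_num)),
        ee_div4 3 ((hmod 3 3 3 (by omega) hsN).trans (by norm_num)),
        if_pos (Or.inr hmr)]
      push_cast
      linear_combination ((-1 + Complex.I) * Complex.I / 2) * hsq2 +
        (-(Complex.I ^ 2 * Complex.I ^ 2) + Complex.I ^ 2) * hJ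

end Kl

/-- **Proposition 2.1, weight 3/2**: for `m, n ∈ ℤ` and odd `c̃ > 0`, with `c = 2c̃`:
`S(m,4n,c,ν_Θ³) = −√2·S(m,n,c̃,ν_Θ³)` if `m ≡ 0, 3 (mod 4)`, and
`S(m,4n,c,ν_Θ³) = √2·S(m,n,c̃,ν_Θ³)` if `m ≡ 1, 2 (mod 4)`. -/
theorem kloosterman_even_odd_weight_three_half (m n : ℤ) (ct : ℕ) (hodd : Odd ct)
    (hpos : 0 < ct) :
    (m % 4 = 0 ∨ m % 4 = 3 →
      SKe m (4 * n) (2 * ct) 3 = -((Real.sqrt 2 : ℝ) : ℂ) * SKo m n ct 3) ∧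
    (m % 4 = 1 ∨ m % 4 = 2 →
      SKe m (4 * n) (2 * ct) 3 = ((Real.sqrt 2 : ℝ) : ℂ) * SKo m n ct 3) := by
  have h2le : 2 ≤ 2 * (2 * ct) := by omega
  have e44 : 2 * (2 * ct) = 4 * ct := by ring
  have hSKo : SKo m n ct 3
      = ee (((3 : ℕ) : ℂ) / 8) * (epsFactor ct)⁻¹ ^ 3 *
        (∑ v ∈ Finset.range ct,
          if Nat.gcd (4 * v) ct = 1 then
            ((jacobiSym (2 * ((2 * v : ℕ) : ℤ)) ct : ℤ) : ℂ) ^ 3 *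
              ee (((m * ((2 * (((4 * v : ℕ) : ZMod ct))⁻¹.val) : ℕ) + n * ((2 * v : ℕ)) : ℤ) : ℂ) /
                (2 * ((ct : ℕ) : ℂ)))
          else 0) := by
    unfold SKo
    rw [Kl.collapseOdd hpos]
  have hSKe : SKe m (4 * n) (2 * ct) 3
      = ∑ δ ∈ ({1, 3} : Finset ℕ),
          (epsFactor δ ^ 3 * (if ct % 4 = 3 ∧ δ = 3 then (-1 : ℂ) else 1) *
            ee (((m * δ * ct : ℤ) : ℂ) / 4)) *
          (∑ v ∈ Finset.range ct,
            if Nat.gcd (4 * v) ct = 1 then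
              ((jacobiSym (2 * ((2 * v : ℕ) : ℤ)) ct : ℤ) : ℂ) ^ 3 *
                ee (((m * ((2 * (((4 * v : ℕ) : ZMod ct))⁻¹.val) : ℕ) + n * ((2 * v : ℕ)) : ℤ) : ℂ) /
                  (2 * ((ct : ℕ) : ℂ)))
            else 0) := by
    unfold SKe
    rw [Kl.collapse' h2le e44.symm]
    rw [Kl.reindex hodd hpos]
    refine Finset.sum_congr rfl fun δ hδm => ?_
    have hδ : δ = 1 ∨ δ = 3 := by simpa using hδm
    rw [Finset.mul_sum]
    refine Finset.sum_congr rfl fun v hvm => ?_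
    rw [Finset.mem_range] at hvm
    by_cases hgv : Nat.gcd (4 * v) ct = 1
    · rw [if_pos hgv, if_pos hgv]
      exact Kl.term_eq hodd hpos m n hδ hvm hgv
    · rw [if_neg hgv, if_neg hgv, mul_zero]
  rw [Finset.sum_pair (show (1 : ℕ) ≠ 3 by norm_num)] at hSKe
  have hc := Kl.const_sum hodd m
  constructor
  · intro hm
    rw [if_pos hm] at hc
    rw [hSKe, hSKo]
    linear_combination (∑ v ∈ Finset.range ct,
          if Nat.gcd (4 * v) ct = 1 then
            ((jacobiSym (2 * ((2 * v : ℕ) : ℤ)) ct : ℤ) : ℂ) ^ 3 *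
              ee (((m * ((2 * (((4 * v : ℕ) : ZMod ct))⁻¹.val) : ℕ) + n * ((2 * v : ℕ)) : ℤ) : ℂ) /
                (2 * ((ct : ℕ) : ℂ)))
          else 0) * hc
  · intro hm
    rw [if_neg (by omega : ¬(m % 4 = 0 ∨ m % 4 = 3))] at hc
    rw [hSKe, hSKo]
    linear_combination (∑ v ∈ Finset.range ct,
          if Nat.gcd (4 * v) ct = 1 then
            ((jacobiSym (2 * ((2 * v : ℕ) : ℤ)) ct : ℤ) : ℂ) ^ 3 *
              ee (((m * ((2 * (((4 * v : ℕ) : ZMod ct))⁻¹.val) : ℕ) + n * ((2 * v : ℕ)) : ℤ) : ℂ) /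
                (2 * ((ct : ℕ) : ℂ)))
          else 0) * hc

end
end

section
/- Proposition 2.1, weight 2: For all m, n ∈ ℤ and every odd integer c̃ > 0, setting c := 2c̃: S(2m,2n,c,ν_Θ⁴) = 2·(−1)^{m+n+1}·S(m,n,c̃,ν_Θ⁴). -/
open Complex Real Filter Topology BigOperators MeasureTheory

noncomputable section

lemma ee_half (k : ℤ) : ee ((k : ℂ)/2) = (-1 : ℂ)^k := by
  unfold ee
  rw [show 2 * (π:ℂ) * Complex.I * ((k:ℂ)/2) = (k:ℂ) * ((π:ℂ) * Complex.I) by ring,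
    Complex.exp_int_mul, Complex.exp_pi_mul_I]

lemma epsFactor_pow_four (d : ℕ) : epsFactor d ^ 4 = 1 := by
  unfold epsFactor; split
  · norm_num
  · rw [show (4:ℕ) = 2*2 by rfl, pow_mul, Complex.I_sq]; norm_num

lemma jacobi_pow_four {a : ℤ} {b : ℕ} (h : Int.gcd a b = 1) : ((jacobiSym a b : ℤ) : ℂ)^4 = 1 := by
  rcases jacobiSym.eq_one_or_neg_one h with h1 | h1 <;> rw [h1] <;> norm_num

lemma coprime_of_mul_mod {a d n : ℕ} (h : (a * d) % n = 1 % n) : Nat.Coprime d n := by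
  have h' : a * d ≡ 1 [MOD n] := h
  have hdvd : (n:ℤ) ∣ (1:ℤ) - (a*d : ℕ) := h'.dvd
  have h1 : (Nat.gcd d n : ℤ) ∣ 1 := by
    have hg1 : (Nat.gcd d n : ℤ) ∣ ((a*d : ℕ):ℤ) :=
      Int.natCast_dvd_natCast.2 ((Nat.gcd_dvd_left d n).mul_left a)
    have hg2 : (Nat.gcd d n : ℤ) ∣ (1 - (a*d:ℕ) : ℤ) :=
      dvd_trans (Int.natCast_dvd_natCast.2 (Nat.gcd_dvd_right d n)) hdvd
    simpa using dvd_add hg2 hg1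
  have := Int.natCast_dvd_natCast.1 (by exact_mod_cast h1 : ((Nat.gcd d n : ℕ) : ℤ) ∣ ((1:ℕ):ℤ))
  exact Nat.dvd_one.1 this

lemma odd_of_mul_mod {a d n : ℕ} (hn : n % 2 = 0) (h : (a*d) % n = 1) :
    a % 2 = 1 ∧ d % 2 = 1 := by
  have h2 : (a*d) % 2 = 1 := by
    have := Nat.mod_mod_of_dvd (a*d) (Nat.dvd_of_mod_eq_zero hn)
    omega
  rw [Nat.mul_mod] at h2
  have ha := Nat.mod_two_eq_zero_or_one a
  have hd := Nat.mod_two_eq_zero_or_one d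
  rcases ha with ha | ha <;> rcases hd with hd | hd <;> simp [ha, hd] at h2 <;> exact ⟨ha, hd⟩

lemma term_shift (m n : ℤ) (t a d a' d' : ℕ) (hpos : 0 < t)
    (ha : a ≡ a' + t [MOD 2*t]) (hd : d ≡ d' + t [MOD 2*t]) :
    ee (((m*a + n*d : ℤ):ℂ)/(2*(t:ℂ))) = (-1:ℂ)^(m+n) * ee (((m*a'+n*d' : ℤ):ℂ)/(2*(t:ℂ))) := by
  obtain ⟨k1, hk1⟩ := (Nat.ModEq.dvd ha : ((2*t : ℕ):ℤ) ∣ ((a' + t : ℕ):ℤ) - (a:ℕ))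
  obtain ⟨k2, hk2⟩ := (Nat.ModEq.dvd hd : ((2*t : ℕ):ℤ) ∣ ((d' + t : ℕ):ℤ) - (d:ℕ))
  have ht : (t:ℂ) ≠ 0 := Nat.cast_ne_zero.2 hpos.ne'
  have ha' : (a:ℤ) = (a':ℤ) + t - 2*t*k1 := by push_cast at hk1 ⊢; linarith
  have hd' : (d:ℤ) = (d':ℤ) + t - 2*t*k2 := by push_cast at hk2 ⊢; linarith
  have key : ((m*a + n*d : ℤ):ℂ)/(2*(t:ℂ))
      = ((m*a'+n*d' : ℤ):ℂ)/(2*(t:ℂ)) + ((m+n : ℤ):ℂ)/2 + ((-(m*k1)-n*k2 : ℤ):ℂ) := by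
    rw [ha', hd']; push_cast; field_simp; ring
  rw [key, ee_add, ee_add, ee_int, ee_half, mul_one, mul_comm]

lemma modaux (t x : ℕ) : ((x + t) % (2*t) + t) % (2*t) = x % (2*t) := by
  rw [Nat.mod_add_mod, show x + t + t = x + 2*t by ring, Nat.add_mod_right]

lemma modpar (t x : ℕ) : (x % (2*t)) % 2 = x % 2 :=
  Nat.mod_mod_of_dvd x (dvd_mul_right 2 t)

lemma inv_mod_two_t {t a' d' : ℕ} (ht : t % 2 = 1) (hpos : 0 < t)
    (ha' : a' % 2 = 0) (hd' : d' % 2 = 0) (h : (a' * d') % t = 1 % t) :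
    (((a' + t) % (2*t)) * ((d' + t) % (2*t))) % (2*t) = 1 := by
  have h1 : ((a' + t) % (2*t)) * ((d' + t) % (2*t)) ≡ (a'+t) * (d'+t) [MOD 2*t] :=
    Nat.ModEq.mul (Nat.mod_modEq _ _) (Nat.mod_modEq _ _)
  have hexp : (a'+t)*(d'+t) = a'*d' + (a'+d')*t + t*t := by ring
  have hc2 : Nat.Coprime 2 t := by
    have : Nat.gcd 2 t = 1 := Nat.Coprime.gcd_eq_one (Nat.coprime_two_left.2 (Nat.odd_iff.2 ht))
    exact this
  have step1 : a'*d' ≡ 1 + t [MOD 2*t] := by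
    rw [← Nat.modEq_and_modEq_iff_modEq_mul hc2]
    constructor
    · show (a'*d') % 2 = (1+t) % 2
      rw [Nat.mul_mod, ha']
      simp
      omega
    · show (a'*d') % t = (1+t) % t
      rw [show 1 + t = 1 + 1*t by ring, Nat.add_mul_mod_self_right]
      exact h
  have step2 : (a'+d')*t ≡ 0 [MOD 2*t] := by
    obtain ⟨u, hu⟩ : ∃ u, a' + d' = 2*u := ⟨(a'+d')/2, by omega⟩
    rw [hu, (Nat.modEq_zero_iff_dvd)]
    exact ⟨u, by ring⟩
  have step3 : t*t ≡ t [MOD 2*t] := by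
    obtain ⟨v, hv⟩ : ∃ v, t = 2*v+1 := ⟨t/2, by omega⟩
    calc t*t = t + (2*t)*v := by rw [hv]; ring
    _ ≡ t + 0 [MOD 2*t] := Nat.ModEq.add_left t ((Nat.modEq_zero_iff_dvd).2 ⟨v, rfl⟩)
    _ = t := by ring
  have h2 : (a'+t)*(d'+t) ≡ (1+t) + 0 + t [MOD 2*t] := by
    rw [hexp]; exact (step1.add step2).add step3
  have h3 : (1+t) + 0 + t ≡ 1 [MOD 2*t] := by
    show (1 + t + 0 + t) % (2*t) = 1 % (2*t)
    rw [show 1 + t + 0 + t = 1 + 2*t by ring, Nat.add_mod_right]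
  have h4 : ((a' + t) % (2*t)) * ((d' + t) % (2*t)) % (2*t) = 1 % (2*t) :=
    (h1.trans h2).trans h3
  rwa [Nat.mod_eq_of_lt (by omega : 1 < 2*t)] at h4

lemma core (m n : ℤ) (t : ℕ) (ht : t % 2 = 1) (hpos : 0 < t) :
    ∑ p ∈ (Finset.Ico 1 (2*(2*t)) ×ˢ Finset.Ico 1 (2*(2*t))).filter
        (fun p => (p.2 * p.1) % (2*(2*t)) = 1),
      ee (((m*(p.2:ℤ) + n*(p.1:ℤ) : ℤ):ℂ)/(2*(t:ℂ)))
    = 2 * (-1:ℂ)^(m+n) * ∑ p ∈ (Finset.range (2*t) ×ˢ Finset.range (2*t)).filter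
        (fun p => p.1 % 2 = 0 ∧ p.2 % 2 = 0 ∧ (p.2*p.1) % t = 1 % t),
      ee (((m*(p.2:ℤ)+n*(p.1:ℤ) : ℤ):ℂ)/(2*(t:ℂ))) := by
  have htdvdM : t ∣ 2*(2*t) := ⟨4, by ring⟩
  have htdvd2 : t ∣ 2*t := ⟨2, by ring⟩
  have h2tdvdM : 2*t ∣ 2*(2*t) := ⟨2, by ring⟩
  -- the 2-to-1 correspondence
  have main :
      ∑ p ∈ (Finset.Ico 1 (2*(2*t)) ×ˢ Finset.Ico 1 (2*(2*t))).filter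
          (fun p => (p.2 * p.1) % (2*(2*t)) = 1),
        ee (((m*(p.2:ℤ) + n*(p.1:ℤ) : ℤ):ℂ)/(2*(t:ℂ)))
      = ∑ x ∈ ((Finset.range (2*t) ×ˢ Finset.range (2*t)).filter
          (fun p => p.1 % 2 = 0 ∧ p.2 % 2 = 0 ∧ (p.2*p.1) % t = 1 % t)) ×ˢ (Finset.univ : Finset Bool),
        (-1:ℂ)^(m+n) * ee (((m*(x.1.2:ℤ)+n*(x.1.1:ℤ) : ℤ):ℂ)/(2*(t:ℂ))) := by
    apply Finset.sum_nbij'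
      (i := fun p => (((p.1 + t) % (2*t), (p.2 + t) % (2*t)), decide (2*t ≤ p.1)))
      (j := fun x => ((x.1.1 + t) % (2*t) + (if x.2 then 2*t else 0),
        if (((x.1.2 + t) % (2*t)) * ((x.1.1 + t) % (2*t) + (if x.2 then 2*t else 0))) % (2*(2*t)) = 1
          then (x.1.2 + t) % (2*t) else (x.1.2 + t) % (2*t) + 2*t))
    -- hi
    · intro p hp
      simp only [Finset.mem_filter, Finset.mem_product, Finset.mem_Ico, Finset.mem_range,
        Finset.mem_univ, and_true] at hp ⊢
      obtain ⟨⟨⟨hd1, hd2⟩, ha1, ha2⟩, hcond⟩ := hp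
      obtain ⟨hao, hdo⟩ := odd_of_mul_mod (n := 2*(2*t)) (by omega) hcond
      refine ⟨⟨Nat.mod_lt _ (by omega), Nat.mod_lt _ (by omega)⟩, ?_, ?_, ?_⟩
      · rw [modpar]; omega
      · rw [modpar]; omega
      · have h1 : (p.2+t) % (2*t) ≡ p.2 [MOD t] := by
          refine ((Nat.mod_modEq _ _).of_dvd htdvd2).trans ?_
          show (p.2 + t) % t = p.2 % t
          exact Nat.add_mod_right _ _
        have h2 : (p.1+t) % (2*t) ≡ p.1 [MOD t] := by
          refine ((Nat.mod_modEq _ _).of_dvd htdvd2).trans ?_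
          exact Nat.add_mod_right _ _
        have hc' : p.2 * p.1 ≡ 1 [MOD 2*(2*t)] := by
          show (p.2 * p.1) % (2*(2*t)) = 1 % (2*(2*t))
          rw [hcond, Nat.mod_eq_of_lt (by omega)]
        exact (h1.mul h2).trans (hc'.of_dvd htdvdM)
    -- hj
    · intro x hx
      simp only [Finset.mem_filter, Finset.mem_product, Finset.mem_Ico, Finset.mem_range,
        Finset.mem_univ, and_true] at hx ⊢
      obtain ⟨⟨hd2', ha2'⟩, hde, hae, hcond⟩ := hx
      set r := (x.1.1 + t) % (2*t) with hr
      set s := (x.1.2 + t) % (2*t) with hs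
      have hr2 : r < 2*t := Nat.mod_lt _ (by omega)
      have hs2 : s < 2*t := Nat.mod_lt _ (by omega)
      have hro : r % 2 = 1 := by rw [hr, modpar]; omega
      have hso : s % 2 = 1 := by rw [hs, modpar]; omega
      set d := r + (if x.2 then 2*t else 0) with hdd
      have hite : (if x.2 = true then 2*t else 0) % 2 = 0 ∧ (if x.2 = true then 2*t else 0) ≤ 2*t := by
        split <;> omega
      have hdbound : 1 ≤ d ∧ d < 2*(2*t) := by rw [hdd]; omega
      have hdo : d % 2 = 1 := by rw [hdd]; omega
      have hsr : (s * r) % (2*t) = 1 := inv_mod_two_t ht hpos hae hde hcond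
      have hdr : d % (2*t) = r % (2*t) := by
        rw [hdd]; split
        · exact Nat.add_mod_right r (2*t)
        · rw [add_zero]
      have hsd : (s * d) % (2*t) = 1 := by
        calc (s*d) % (2*t) = (s*r) % (2*t) := by
              conv_lhs => rw [Nat.mul_mod, hdr, ← Nat.mul_mod]
        _ = 1 := hsr
      constructor
      · constructor
        · exact hdbound
        · split
          · omega
          · omega
      · by_cases hc : (s*d) % (2*(2*t)) = 1
        · rw [if_pos hc]; exact hc
        · rw [if_neg hc]
          -- (s*d) % M = 2*t+1
          have hX : (s*d) % (2*(2*t)) % (2*t) = 1 := by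
            rw [Nat.mod_mod_of_dvd _ h2tdvdM]; exact hsd
          have hXlt : (s*d) % (2*(2*t)) < 2*(2*t) := Nat.mod_lt _ (by omega)
          have hXval : (s*d) % (2*(2*t)) = 2*t + 1 := by
            have hq := Nat.div_add_mod ((s*d) % (2*(2*t))) (2*t)
            have hqlt : (s*d) % (2*(2*t)) / (2*t) < 2 :=
              Nat.div_lt_of_lt_mul (by omega)
            interval_cases hqq : ((s*d) % (2*(2*t)) / (2*t)) <;> omega
          have hsdX : s*d ≡ 2*t+1 [MOD 2*(2*t)] := by
            rw [← hXval]; exact (Nat.mod_modEq _ _).symm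
          have h2td : 2*t*d ≡ 2*t [MOD 2*(2*t)] := by
            obtain ⟨w, hw⟩ : ∃ w, d = 2*w+1 := ⟨d/2, by omega⟩
            rw [hw, show 2*t*(2*w+1) = 2*t + (2*(2*t))*w by ring]
            exact (Nat.ModEq.add_left _ ((Nat.modEq_zero_iff_dvd).2 ⟨w, rfl⟩)).trans
              (by rw [add_zero])
          have hfin : (s + 2*t)*d ≡ 1 [MOD 2*(2*t)] := by
            have := hsdX.add h2td
            rw [show s*d + 2*t*d = (s+2*t)*d by ring] at this
            refine this.trans ?_
            show (2*t+1+2*t) % (2*(2*t)) = 1 % (2*(2*t))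
            rw [show 2*t+1+2*t = 1 + 2*(2*t) by ring, Nat.add_mod_right]
          show ((s + 2*t) * d) % (2*(2*t)) = 1
          rw [hfin, Nat.mod_eq_of_lt (by omega)]
    -- left inverse
    · intro p hp
      simp only [Finset.mem_filter, Finset.mem_product, Finset.mem_Ico] at hp
      obtain ⟨⟨⟨hd1, hd2⟩, ha1, ha2⟩, hcond⟩ := hp
      obtain ⟨hao, hdo⟩ := odd_of_mul_mod (n := 2*(2*t)) (by omega) hcond
      dsimp only
      rw [modaux, modaux]
      have hdc : p.1 % (2*t) + (if (decide (2*t ≤ p.1)) then 2*t else 0) = p.1 := by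
        by_cases hb : 2*t ≤ p.1
        · rw [if_pos (by simpa using hb), Nat.mod_eq_sub_mod hb,
            Nat.mod_eq_of_lt (by omega)]
          omega
        · rw [if_neg (by simpa using hb), Nat.mod_eq_of_lt (by omega), add_zero]
      rw [hdc]
      by_cases hab : 2*t ≤ p.2
      · have hp2 : p.2 % (2*t) = p.2 - 2*t := by
          rw [Nat.mod_eq_sub_mod hab, Nat.mod_eq_of_lt (by omega)]
        rw [hp2]
        have hfalse : ¬ ((p.2 - 2*t) * p.1) % (2*(2*t)) = 1 := by
          intro h1
          have e3 : (p.2 - 2*t)*p.1 + 2*t*p.1 = p.2*p.1 := by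
            rw [Nat.sub_mul, Nat.sub_add_cancel (Nat.mul_le_mul_right _ hab)]
          have hA : (p.2-2*t)*p.1 + 2*t*p.1 ≡ (p.2-2*t)*p.1 + 0 [MOD 2*(2*t)] := by
            show ((p.2-2*t)*p.1 + 2*t*p.1) % (2*(2*t)) = ((p.2-2*t)*p.1 + 0) % (2*(2*t))
            rw [e3, hcond, add_zero, h1]
          have hzero : 2*t*p.1 ≡ 0 [MOD 2*(2*t)] := Nat.ModEq.add_left_cancel' _ hA
          have h2td : 2*t*p.1 ≡ 2*t [MOD 2*(2*t)] := by
            obtain ⟨w, hw⟩ : ∃ w, p.1 = 2*w+1 := ⟨p.1/2, by omega⟩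
            rw [hw, show 2*t*(2*w+1) = 2*t + (2*(2*t))*w by ring]
            exact (Nat.ModEq.add_left _ ((Nat.modEq_zero_iff_dvd).2 ⟨w, rfl⟩)).trans
              (by rw [add_zero])
          have : (2*t) % (2*(2*t)) = 0 % (2*(2*t)) := (h2td.symm.trans hzero)
          rw [Nat.mod_eq_of_lt (by omega), Nat.zero_mod] at this
          omega
        rw [if_neg hfalse]
        have : p.2 - 2*t + 2*t = p.2 := by omega
        rw [this]
      · have hp2 : p.2 % (2*t) = p.2 := Nat.mod_eq_of_lt (by omega)
        rw [hp2, if_pos hcond]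
    -- right inverse
    · intro x hx
      simp only [Finset.mem_filter, Finset.mem_product, Finset.mem_range,
        Finset.mem_univ, and_true] at hx
      obtain ⟨⟨hd2', ha2'⟩, hde, hae, hcond⟩ := hx
      dsimp only
      set r := (x.1.1 + t) % (2*t) with hr
      set s := (x.1.2 + t) % (2*t) with hs
      have hr2 : r < 2*t := Nat.mod_lt _ (by omega)
      have hs2 : s < 2*t := Nat.mod_lt _ (by omega)
      set d := r + (if x.2 then 2*t else 0) with hdd
      set a := if (s * d) % (2*(2*t)) = 1 then s else s + 2*t with haa
      have hdA : (d + t) % (2*t) = x.1.1 := by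
        have h1 : (d + t) % (2*t) = (r + t) % (2*t) := by
          rw [hdd]; split
          · rw [show r + 2*t + t = r + t + 2*t by ring, Nat.add_mod_right]
          · rw [add_zero]
        rw [h1, hr, modaux, Nat.mod_eq_of_lt hd2']
      have haA : (a + t) % (2*t) = x.1.2 := by
        have h1 : (a + t) % (2*t) = (s + t) % (2*t) := by
          rw [haa]; split
          · rfl
          · rw [show s + 2*t + t = s + t + 2*t by ring, Nat.add_mod_right]
        rw [h1, hs, modaux, Nat.mod_eq_of_lt ha2']
      have hr2' : r < 2*t := Nat.mod_lt _ (by omega)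
      have hbA : decide (2*t ≤ d) = x.2 := by
        rcases hb : x.2
        · have hnd : ¬ 2*t ≤ d := by rw [hdd, hb]; simp; omega
          simpa using hnd
        · have hyd : 2*t ≤ d := by rw [hdd, hb]; simp
          simpa using hyd
      exact Prod.ext (Prod.ext hdA haA) hbA
    -- values
    · intro p hp
      simp only [Finset.mem_filter, Finset.mem_product, Finset.mem_Ico] at hp
      obtain ⟨⟨⟨hd1, hd2⟩, ha1, ha2⟩, hcond⟩ := hp
      dsimp only
      refine term_shift m n t p.2 p.1 ((p.2 + t) % (2*t)) ((p.1 + t) % (2*t)) hpos ?_ ?_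
      · show p.2 % (2*t) = ((p.2 + t) % (2*t) + t) % (2*t)
        rw [modaux]
      · show p.1 % (2*t) = ((p.1 + t) % (2*t) + t) % (2*t)
        rw [modaux]
  rw [main, Finset.sum_product]
  have : ∀ p : ℕ × ℕ, ∑ _b : Bool,
      (-1:ℂ)^(m+n) * ee (((m*(p.2:ℤ)+n*(p.1:ℤ) : ℤ):ℂ)/(2*(t:ℂ)))
      = 2 * ((-1:ℂ)^(m+n) * ee (((m*(p.2:ℤ)+n*(p.1:ℤ) : ℤ):ℂ)/(2*(t:ℂ)))) := by
    intro p
    rw [Finset.sum_const, Finset.card_univ]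
    simp [two_smul, two_mul]
  simp only [this]
  rw [Finset.mul_sum]
  exact Finset.sum_congr rfl fun p _ => by ring

/-- **Proposition 2.1, weight 2**: for `m, n ∈ ℤ` and odd `c̃ > 0`, with `c = 2c̃`:
`S(2m,2n,c,ν_Θ⁴) = 2·(−1)^{m+n+1}·S(m,n,c̃,ν_Θ⁴)`. -/
theorem kloosterman_even_odd_weight_two (m n : ℤ) (ct : ℕ) (hodd : Odd ct) (hpos : 0 < ct) :
    SKe (2 * m) (2 * n) (2 * ct) 4 = 2 * (-1 : ℂ) ^ (m + n + 1) * SKo m n ct 4 := by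
  have ht : ct % 2 = 1 := Nat.odd_iff.1 hodd
  have hctC : ((ct:ℕ):ℂ) ≠ 0 := Nat.cast_ne_zero.2 hpos.ne'
  have hL : SKe (2*m) (2*n) (2*ct) 4
      = ∑ p ∈ (Finset.Ico 1 (2*(2*ct)) ×ˢ Finset.Ico 1 (2*(2*ct))).filter
          (fun p => (p.2 * p.1) % (2*(2*ct)) = 1),
        ee (((m*(p.2:ℤ) + n*(p.1:ℤ) : ℤ):ℂ)/(2*(ct:ℂ))) := by
    unfold SKe
    rw [← Finset.sum_product', Finset.sum_filter]
    refine Finset.sum_congr rfl fun p hp => ?_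
    split_ifs with h
    · have hcop : Nat.Coprime p.1 (2*(2*ct)) :=
        coprime_of_mul_mod (by rw [h, Nat.mod_eq_of_lt (show 1 < 2*(2*ct) by omega)])
      have hg : Int.gcd (2 * ((2*ct : ℕ) : ℤ)) p.1 = 1 := by
        rw [show (2 * ((2*ct : ℕ) : ℤ)) = ((2*(2*ct) : ℕ) : ℤ) by push_cast; ring,
          Int.gcd_natCast_natCast]
        exact Nat.Coprime.symm hcop
      rw [epsFactor_pow_four, jacobi_pow_four hg, one_mul, one_mul]
      congr 1
      push_cast
      field_simp
    · rfl
  have hR : SKo m n ct 4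
      = - ∑ p ∈ (Finset.range (2*ct) ×ˢ Finset.range (2*ct)).filter
          (fun p => p.1 % 2 = 0 ∧ p.2 % 2 = 0 ∧ (p.2*p.1) % ct = 1 % ct),
        ee (((m*(p.2:ℤ)+n*(p.1:ℤ) : ℤ):ℂ)/(2*(ct:ℂ))) := by
    unfold SKo
    have e1 : ee (((4:ℕ):ℂ)/8) = -1 := by
      rw [show ((4:ℕ):ℂ)/8 = ((1:ℤ):ℂ)/2 by norm_num, ee_half, zpow_one]
    have e2 : (epsFactor ct)⁻¹ ^ 4 = 1 := by
      rw [inv_pow, epsFactor_pow_four, inv_one]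
    rw [e1, e2, mul_one, neg_one_mul]
    congr 1
    rw [← Finset.sum_product', Finset.sum_filter]
    refine Finset.sum_congr rfl fun p hp => ?_
    split_ifs with h
    · obtain ⟨hde, hae, hcond⟩ := h
      have hcop : Nat.Coprime p.1 ct := coprime_of_mul_mod hcond
      have hc2 : Nat.Coprime 2 ct := Nat.coprime_two_left.2 (Nat.odd_iff.2 ht)
      have hg : Int.gcd (2 * ((p.1 : ℕ) : ℤ)) ct = 1 := by
        rw [show (2 * ((p.1 : ℕ) : ℤ)) = ((2*p.1 : ℕ) : ℤ) by push_cast; ring,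
          Int.gcd_natCast_natCast]
        exact Nat.Coprime.mul hc2 hcop
      rw [jacobi_pow_four hg, one_mul]
    · rfl
  rw [hL, hR, core m n ct ht hpos,
    zpow_add₀ (by norm_num : (-1:ℂ) ≠ 0) (m+n) 1, zpow_one]
  ring

end
end

section
/- Lemma 2.6 (exponential interpolation): Let c be a positive integer, let a be an integer with −c ≤ a < c, and let r ∈ ℝ \ ℤ. Then e(ra/(2c)) = (1/(2c))·Σ_{k=0}^{2c−1} [2i·sin(π(r−k)) / (e((r−k)/(2c)) − 1)]·e(ka/(2c)). (Each denominator is nonzero since r ∉ ℤ.) -/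
open Complex Real Filter Topology BigOperators

noncomputable section

lemma key_sum (n m : ℕ) (hm1 : 1 ≤ m) (hm2 : m ≤ n) (ω z : ℂ)
    (hω : IsPrimitiveRoot ω n) (hz : z ^ n ≠ 1) :
    ∑ k ∈ Finset.range n, ω ^ (k * m) / (z - ω ^ k) = n * z ^ (m - 1) / (z ^ n - 1) := by
  have hzn : z ^ n - 1 ≠ 0 := sub_ne_zero.mpr hz
  have hzω : ∀ k : ℕ, z - ω ^ k ≠ 0 := by
    intro k h
    apply hz
    have hzk : z = ω ^ k := by linear_combination h
    rw [hzk, ← pow_mul, mul_comm, pow_mul, hω.pow_eq_one, one_pow]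
  rw [eq_div_iff hzn, Finset.sum_mul]
  have hterm : ∀ k ∈ Finset.range n,
      ω ^ (k * m) / (z - ω ^ k) * (z ^ n - 1)
        = ∑ j ∈ Finset.range n, z ^ j * ω ^ (k * (m + n - 1 - j)) := by
    intro k hk
    have hg := geom_sum₂_mul z (ω ^ k) n
    have hωkn : (ω ^ k) ^ n = 1 := by
      rw [← pow_mul, mul_comm, pow_mul, hω.pow_eq_one, one_pow]
    rw [hωkn] at hg
    rw [div_mul_eq_mul_div, ← hg, mul_div_assoc, mul_div_cancel_right₀ _ (hzω k),
      Finset.mul_sum]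
    refine Finset.sum_congr rfl fun j hj => ?_
    have hjn : j < n := Finset.mem_range.mp hj
    have hexp : k * m + k * (n - 1 - j) = k * (m + n - 1 - j) := by
      rw [← Nat.mul_add]
      congr 1
      omega
    rw [← pow_mul, ← hexp, pow_add]
    ring
  rw [Finset.sum_congr rfl hterm, Finset.sum_comm]
  have hinner : ∀ j ∈ Finset.range n,
      ∑ k ∈ Finset.range n, z ^ j * ω ^ (k * (m + n - 1 - j))
        = z ^ j * (if j = m - 1 then (n : ℂ) else 0) := by
    intro j hj
    have hjn : j < n := Finset.mem_range.mp hj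
    rw [← Finset.mul_sum]
    congr 1
    have hrw : ∀ k : ℕ, ω ^ (k * (m + n - 1 - j)) = (ω ^ (m + n - 1 - j)) ^ k := by
      intro k; rw [← pow_mul, mul_comm]
    simp only [hrw]
    by_cases hj' : j = m - 1
    · subst hj'
      have h : m + n - 1 - (m - 1) = n := by omega
      rw [h, hω.pow_eq_one, if_pos rfl]
      simp
    · have hne : ω ^ (m + n - 1 - j) ≠ 1 := by
        rw [Ne, hω.pow_eq_one_iff_dvd]
        intro hdvd
        have h1 : 0 < m + n - 1 - j := by omega
        have h2 : m + n - 1 - j < 2 * n := by omega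
        have h3 : m + n - 1 - j ≠ n := by omega
        obtain ⟨t, ht⟩ := hdvd
        have ht2 : t < 2 := by
          by_contra hh
          push_neg at hh
          have : n * 2 ≤ n * t := Nat.mul_le_mul_left n hh
          omega
        interval_cases t <;> omega
      rw [geom_sum_eq hne]
      have : (ω ^ (m + n - 1 - j)) ^ n = 1 := by
        rw [← pow_mul, mul_comm, pow_mul, hω.pow_eq_one, one_pow]
      rw [this]
      simp [hj']
  rw [Finset.sum_congr rfl hinner, Finset.sum_eq_single_of_mem (m - 1) (by
    exact Finset.mem_range.mpr (by omega))]
  · simp [mul_comm]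
  · intro j hj hj'
    simp [hj']

lemma two_I_sin (w : ℂ) : 2 * Complex.I * Complex.sin w
    = Complex.exp (w * Complex.I) - Complex.exp (-(w * Complex.I)) := by
  rw [Complex.sin, show -w * Complex.I = -(w * Complex.I) by ring]
  have h := Complex.I_sq
  field_simp
  linear_combination (Complex.exp (-(Complex.I * w)) - Complex.exp (Complex.I * w)) * h

/-- **Lemma 2.6 (exponential interpolation)**: for a positive integer `c`, an integer
`−c ≤ a < c` and a real `r ∉ ℤ`,
`e(ra/(2c)) = (1/(2c)) Σ_{k=0}^{2c−1} [2i sin(π(r−k)) / (e((r−k)/(2c)) − 1)] e(ka/(2c))`. -/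
theorem exponential_interpolation (c : ℕ) (hc : 0 < c) (a : ℤ)
    (ha : -(c : ℤ) ≤ a) (ha' : a < (c : ℤ)) (r : ℝ) (hr : ∀ k : ℤ, r ≠ k) :
    ee (((r * a / (2 * c) : ℝ) : ℝ) : ℂ) =
      (1 / (2 * (c : ℂ))) * ∑ k ∈ Finset.range (2 * c),
        (2 * Complex.I * ((Real.sin (π * (r - k)) : ℝ) : ℂ) /
          (ee (((r - k) / (2 * c) : ℝ) : ℂ) - 1)) *
          ee ((((k : ℝ) * a / (2 * c) : ℝ) : ℝ) : ℂ) := by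
  set N : ℕ := 2 * c with hNdef
  have hN0 : 0 < N := by omega
  have hNC : ((N : ℂ)) ≠ 0 := by exact_mod_cast Nat.cast_ne_zero.mpr hN0.ne'
  have hcC : ((c : ℂ)) ≠ 0 := Nat.cast_ne_zero.mpr hc.ne'
  set ω : ℂ := Complex.exp (2 * π * Complex.I / N) with hωdef
  have hω : IsPrimitiveRoot ω N := Complex.isPrimitiveRoot_exp N hN0.ne'
  have hω0 : ω ≠ 0 := Complex.exp_ne_zero _
  set z : ℂ := Complex.exp (2 * π * Complex.I * r / N) with hzdef
  set u : ℂ := Complex.exp (π * r * Complex.I) with hudef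
  have hu0 : u ≠ 0 := Complex.exp_ne_zero _
  have hz0 : z ≠ 0 := Complex.exp_ne_zero _
  set m : ℕ := (a + c).toNat + 1 with hmdef
  have hac : (((a + c).toNat : ℤ)) = a + c := Int.toNat_of_nonneg (by omega)
  have hm1 : 1 ≤ m := le_add_self
  have hm2 : m ≤ N := by omega
  have hzN : z ^ N = u ^ 2 := by
    rw [hzdef, ← Complex.exp_nat_mul, hudef, ← Complex.exp_nat_mul]
    congr 1
    field_simp
    ring
  have hzN1 : z ^ N ≠ 1 := by
    rw [hzN]
    intro h
    rw [hudef, ← Complex.exp_nat_mul, Complex.exp_eq_one_iff] at h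
    obtain ⟨n, hn⟩ := h
    have hne2 : (2 * (π : ℂ) * Complex.I) ≠ 0 :=
      mul_ne_zero (mul_ne_zero two_ne_zero (Complex.ofReal_ne_zero.mpr Real.pi_ne_zero))
        Complex.I_ne_zero
    have h2 : (2 * (π : ℂ) * Complex.I) * r = (2 * (π : ℂ) * Complex.I) * n := by
      push_cast at hn ⊢
      linear_combination hn
    have : (r : ℂ) = (n : ℂ) := mul_left_cancel₀ hne2 h2
    exact hr n (by exact_mod_cast this)
  have hωk0 : ∀ k : ℕ, (ω : ℂ) ^ k ≠ 0 := fun k => pow_ne_zero _ hω0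
  have hzωk : ∀ k : ℕ, z - ω ^ k ≠ 0 := by
    intro k h
    apply hzN1
    have hzk : z = ω ^ k := by linear_combination h
    rw [hzk, ← pow_mul, mul_comm, pow_mul, hω.pow_eq_one, one_pow]
  have hωc : ω ^ c = -1 := by
    rw [hωdef, ← Complex.exp_nat_mul, show (c : ℂ) * (2 * π * Complex.I / N) = π * Complex.I by
      rw [hNdef]; push_cast; field_simp, Complex.exp_pi_mul_I]
  have hneg : ∀ k : ℕ, ((-1 : ℂ) ^ k)⁻¹ = (-1 : ℂ) ^ k := by
    intro k; rw [← inv_pow, inv_neg, inv_one]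
  have hterm : ∀ k ∈ Finset.range N,
      (2 * Complex.I * ((Real.sin (π * (r - k)) : ℝ) : ℂ) /
          (ee (((r - k) / (2 * c) : ℝ) : ℂ) - 1)) *
          ee ((((k : ℝ) * a / (2 * c) : ℝ) : ℝ) : ℂ)
        = (u - u⁻¹) * (ω ^ (k * m) / (z - ω ^ k)) := by
    intro k hk
    have hs : ((Real.sin (π * (r - k)) : ℝ) : ℂ) = Complex.sin ((π : ℂ) * ((r : ℂ) - k)) := by
      rw [Complex.ofReal_sin]
      push_cast
      ring_nf
    have hnum : 2 * Complex.I * Complex.sin ((π : ℂ) * ((r : ℂ) - k))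
        = (-1 : ℂ) ^ k * (u - u⁻¹) := by
      rw [two_I_sin]
      have e1 : Complex.exp ((π : ℂ) * ((r : ℂ) - k) * Complex.I) = u * (-1 : ℂ) ^ k := by
        rw [show (π : ℂ) * ((r : ℂ) - k) * Complex.I
            = π * r * Complex.I - (k : ℂ) * (π * Complex.I) by ring]
        rw [Complex.exp_sub, Complex.exp_nat_mul, Complex.exp_pi_mul_I, hudef,
          div_eq_mul_inv, hneg]
      have e2 : Complex.exp (-((π : ℂ) * ((r : ℂ) - k) * Complex.I)) = u⁻¹ * (-1 : ℂ) ^ k := by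
        rw [show -((π : ℂ) * ((r : ℂ) - k) * Complex.I)
            = -(π * r * Complex.I) + (k : ℂ) * (π * Complex.I) by ring]
        rw [Complex.exp_add, Complex.exp_neg, Complex.exp_nat_mul, Complex.exp_pi_mul_I, hudef]
      rw [e1, e2]
      ring
    have hden : ee (((r - k) / (2 * c) : ℝ) : ℂ) - 1 = (z - ω ^ k) / ω ^ k := by
      have h1 : ee (((r - k) / (2 * c) : ℝ) : ℂ) = z / ω ^ k := by
        rw [ee, show ((((r - k) / (2 * c) : ℝ)) : ℂ) = ((r : ℂ) - k) / N by
          rw [hNdef]; push_cast; ring]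
        rw [show 2 * (π : ℂ) * Complex.I * (((r : ℂ) - k) / N)
            = 2 * π * Complex.I * r / N - (k : ℂ) * (2 * π * Complex.I / N) by
          field_simp]
        rw [Complex.exp_sub, Complex.exp_nat_mul, hzdef, hωdef]
      rw [h1]
      field_simp
    have hfac : ee ((((k : ℝ) * a / (2 * c) : ℝ) : ℝ) : ℂ) = ω ^ ((k : ℤ) * a) := by
      rw [ee, show (((((k : ℝ)) * a / (2 * c) : ℝ)) : ℂ) = (((k : ℤ) * a : ℤ) : ℂ) / N by
        rw [hNdef]; push_cast; ring]
      rw [show 2 * (π : ℂ) * Complex.I * ((((k : ℤ) * a : ℤ) : ℂ) / N)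
          = (((k : ℤ) * a : ℤ) : ℂ) * (2 * π * Complex.I / N) by ring]
      rw [Complex.exp_int_mul, hωdef]
    have hpow : (-1 : ℂ) ^ k * ω ^ k * ω ^ ((k : ℤ) * a) = ω ^ (k * m) := by
      rw [← hωc, ← pow_mul]
      rw [show ω ^ (c * k) = ω ^ ((c * k : ℕ) : ℤ) from (zpow_natCast _ _).symm,
        show ω ^ k = ω ^ ((k : ℕ) : ℤ) from (zpow_natCast _ _).symm,
        show ω ^ (k * m) = ω ^ ((k * m : ℕ) : ℤ) from (zpow_natCast _ _).symm,
        ← zpow_add₀ hω0, ← zpow_add₀ hω0]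
      congr 1
      have hmz : ((m : ℕ) : ℤ) = a + c + 1 := by
        rw [hmdef]; push_cast [hac]; ring
      push_cast [hmz]
      ring
    rw [hs, hnum, hden, hfac]
    rw [div_div_eq_mul_div, div_mul_eq_mul_div, ← mul_div_assoc]
    congr 1
    linear_combination (u - u⁻¹) * hpow
  rw [Finset.sum_congr rfl hterm, ← Finset.mul_sum,
    key_sum N m hm1 hm2 ω z hω hzN1]
  have hlhs : ee (((r * a / (2 * c) : ℝ) : ℝ) : ℂ) = z ^ (a : ℤ) := by
    rw [ee, show 2 * (π : ℂ) * Complex.I * (((r * a / (2 * c) : ℝ)) : ℂ)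
        = (a : ℂ) * (2 * π * Complex.I * r / N) by
      rw [hNdef]; push_cast; field_simp]
    rw [Complex.exp_int_mul, hzdef]
  have hzm : z ^ (m - 1) = z ^ (a : ℤ) * u := by
    have h1 : (m - 1 : ℕ) = (a + c).toNat := by omega
    rw [h1, show z ^ ((a + c).toNat) = z ^ (((a + c).toNat : ℤ)) from (zpow_natCast _ _).symm,
      hac, zpow_add₀ hz0]
    congr 1
    rw [show z ^ (c : ℤ) = z ^ c from zpow_natCast _ _, hzdef, ← Complex.exp_nat_mul, hudef]
    congr 1
    rw [hNdef]
    push_cast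
    field_simp
  have hu21 : u ^ 2 - 1 ≠ 0 := by rw [← hzN]; exact sub_ne_zero.mpr hzN1
  rw [hlhs, hzm, hzN]
  have hNC' : ((N : ℂ)) = 2 * c := by rw [hNdef]; push_cast; ring
  rw [hNC']
  field_simp

end
end
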